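/- arXiv:1910.14146 — 6 statements merged into one kernel-verified Lean document; each statement's English description precedes it below -/
import Mathlib

section
/- Let H be a subgroup of a group G and assume H is left relatively convex in G. Then for every integer k ≥ 2 and every g ∈ G, if there exist h₁, …, h_k ∈ H with g h₁ g h₂ ⋯ g h_k = 1, then g ∈ H. In other words, the pair (G,H) is ∞-relatively torsion-free. -/
/-- A subgroup `H ≤ G` is *left relatively convex* if there is a total (linear) order on the
left coset space `G ⧸ H` that is invariant under the left multiplication action of `G`. -/
def LeftRelativelyConvex (G : Type*) [Group G] (H : Subgroup G) : Prop :=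
  ∃ r : (G ⧸ H) → (G ⧸ H) → Prop, IsLinearOrder (G ⧸ H) r ∧
    ∀ (g : G) (x y : G ⧸ H), r x y → r (g • x) (g • y)

/-!
Write `o` for the coset `H` and `x = g • o`. If `g ∉ H` then `x ≠ o`, say `o < x` (otherwise
reverse the order). Every factor `g hᵢ` also sends `o` to `x`, so it moves `o` up, and an
invariant order makes the set of elements moving `o` up closed under products. Hence the product
`g h₁ ⋯ g h_k` moves `o` strictly up and cannot be `1`.
-/

noncomputable abbrev IsLinearOrder.toLinearOrder {α : Type*} (r : α → α → Prop)
    [IsLinearOrder α r] : LinearOrder α where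
  le := r
  le_refl := refl_of r
  le_trans _ _ _ := trans_of r
  le_antisymm _ _ := antisymm_of r
  le_total := total_of r
  toDecidableLE := Classical.decRel r

section OrderedAction

variable {G X : Type*} [Monoid G] [MulAction G X]

theorem lt_list_prod_smul [Preorder X] (hmono : ∀ g : G, Monotone (g • · : X → X)) {x : X} :
    ∀ {l : List G}, l ≠ [] → (∀ w ∈ l, x < w • x) → x < l.prod • x
  | [], hl, _ => absurd rfl hl
  | [w], _, hx => by simpa using hx w List.mem_cons_self
  | w :: v :: t, _, hx => by
    have ht : x < (v :: t).prod • x :=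
      lt_list_prod_smul hmono (List.cons_ne_nil v t) fun u hu => hx u (List.mem_cons_of_mem w hu)
    calc x < w • x := hx w List.mem_cons_self
      _ ≤ w • (v :: t).prod • x := hmono w ht.le
      _ = (w :: v :: t).prod • x := by rw [List.prod_cons (a := w), mul_smul]

theorem list_prod_smul_ne_of_forall_smul_eq [LinearOrder X]
    (hmono : ∀ g : G, Monotone (g • · : X → X)) {x y : X} (hxy : x ≠ y) {l : List G}
    (hl : l ≠ []) (hw : ∀ w ∈ l, w • x = y) : l.prod • x ≠ x := by
  rcases hxy.lt_or_gt with hlt | hgt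
  · exact (lt_list_prod_smul hmono hl fun w hw' => hw w hw' ▸ hlt).ne'
  · exact (lt_list_prod_smul (X := Xᵒᵈ) (fun g => (hmono g).dual) hl
      fun w hw' => hw w hw' ▸ hgt).ne'

end OrderedAction

/-- **Left relatively convex subgroups are relatively torsion-free** (Lemma
"left relatively convex implies RTF").  If `H` is left relatively convex in `G`, then for
every `k ≥ 2` and every `g ∈ G`, an equation `g h₁ g h₂ ⋯ g h_k = 1` with all `hᵢ ∈ H`
forces `g ∈ H`; that is, the pair `(G, H)` is `∞`-relatively torsion-free. -/
theorem mem_of_leftRelativelyConvex {G : Type*} [Group G] (H : Subgroup G)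
    (hconv : LeftRelativelyConvex G H)
    (k : ℕ) (hk : 2 ≤ k) (g : G) (h : Fin k → G) (hh : ∀ i, h i ∈ H)
    (hprod : (List.ofFn fun i => g * h i).prod = 1) :
    g ∈ H := by
  obtain ⟨r, hlin, hinv⟩ := hconv
  let := IsLinearOrder.toLinearOrder r
  by_contra hg
  have hne : ((1 : G) : G ⧸ H) ≠ g := by
    rwa [Ne, QuotientGroup.eq, inv_one, one_mul]
  have hl : List.ofFn (fun i => g * h i) ≠ [] := by
    simp only [ne_eq, List.ofFn_eq_nil_iff]
    omega
  have hfactor : ∀ w ∈ List.ofFn (fun i => g * h i), w • ((1 : G) : G ⧸ H) = g := by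
    simp only [List.mem_ofFn, forall_exists_index]
    rintro _ i rfl
    rw [MulAction.Quotient.smul_coe, smul_eq_mul, mul_one, QuotientGroup.mk_mul_of_mem g (hh i)]
  exact list_prod_smul_ne_of_forall_smul_eq (fun g _ _ => hinv g _ _) hne hl hfactor
    (by rw [hprod, one_smul])
end

section
/- Let V be a group with subgroups A, B ≤ V, let φ : A → B be an isomorphism, and let G = V∗_φ be the associated HNN extension. Let 3 ≤ n ≤ ∞. If the pairs (V, A) and (V, B) are n-relatively torsion-free, then the pair (G, V) is n-relatively torsion-free, where V is regarded as a subgroup of G. -/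
section RTF

variable {G : Type*} [Group G]

/-- `g` is a relative `k`-torsion for the pair `(G, H)`. -/
def IsRelTorsion (H : Subgroup G) (g : G) (k : ℕ) : Prop :=
  g ∉ H ∧ ∃ h : Fin k → G, (∀ i, h i ∈ H) ∧ (List.ofFn fun i => g * h i).prod = 1

/-- The pair `(G, H)` is `n`-relatively torsion-free (`n`-RTF), for `n ∈ ℕ∞`:
there is no relative `k`-torsion for any `2 ≤ k < n`. -/
def IsRTF (H : Subgroup G) (n : ℕ∞) : Prop :=
  ∀ k : ℕ, 2 ≤ k → (k : ℕ∞) < n → ∀ g : G, ¬ IsRelTorsion H g k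

end RTF

/-!
Write `g ∉ V` as a reduced word. A relation `g c₁ g c₂ ⋯ g cₖ = 1` with `cᵢ ∈ V` puts
`g c₁ g ⋯ c_{k-1} g` in `V`, and cancellation can only occur where two copies of `g` meet.
Stripping the outermost letters `t^γ`, `t^γ'` of `g`, each junction becomes a letter `t^γ' x t^γ`
between copies of the inner word: an unpinched junction splits the product into independent
blocks, a pinched one collapses into the associated subgroup. Once only the base group is left,
the product reads `w d₁ w ⋯ d_r w` with `w ∉ A` (or `B`) and `dᵢ ∈ A` (or `B`); relative
torsion-freeness of `(V, A)` and `(V, B)` says precisely that it is not in `A` (or `B`), so the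
`t`-letters around it do not pinch either. Hence the whole product is a reduced word containing
`t`, contradicting Britton's lemma.
-/

section InterleavedProd

variable {G : Type*} [Group G]

def interleavedProd (g : G) : List G → G
  | [] => g
  | c :: cs => g * c * interleavedProd g cs

@[simp]
theorem interleavedProd_nil (g : G) : interleavedProd g [] = g := rfl

@[simp]
theorem interleavedProd_cons (g c : G) (cs : List G) :
    interleavedProd g (c :: cs) = g * c * interleavedProd g cs := rfl

theorem interleavedProd_append_cons (g c : G) (cs cs' : List G) :
    interleavedProd g (cs ++ c :: cs') =
      interleavedProd g cs * c * interleavedProd g cs' := by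
  induction cs with
  | nil => rfl
  | cons d cs ih => simp [ih, mul_assoc]

theorem interleavedProd_mul_mul (a g b : G) (cs : List G) :
    interleavedProd (a * g * b) cs = a * interleavedProd g (cs.map (b * · * a)) * b := by
  induction cs with
  | nil => rfl
  | cons c cs ih =>
    rw [interleavedProd_cons, ih, List.map_cons, interleavedProd_cons]
    simp only [mul_assoc]

theorem map_interleavedProd {H : Type*} [Group H] (f : G →* H) (g : G) (cs : List G) :
    f (interleavedProd g cs) = interleavedProd (f g) (cs.map f) := by
  induction cs with
  | nil => rfl
  | cons c cs ih => simp [ih]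

theorem prod_map_mul_mul_eq_interleavedProd (g : G) (cs : List G) :
    (cs.map (g * ·)).prod * g = interleavedProd g cs := by
  induction cs with
  | nil => simp
  | cons c cs ih => simp [← ih, mul_assoc]

theorem isRelTorsion_iff {H : Subgroup G} {g : G} {k : ℕ} :
    IsRelTorsion H g k ↔
      g ∉ H ∧ ∃ l : List G, l.length = k ∧ (∀ h ∈ l, h ∈ H) ∧ (l.map (g * ·)).prod = 1 := by
  refine and_congr_right fun _ => ⟨?_, ?_⟩
  · rintro ⟨h, hH, hprod⟩
    exact ⟨List.ofFn h, by simp, by simpa using hH, by rwa [List.map_ofFn]⟩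
  · rintro ⟨l, rfl, hH, hprod⟩
    exact ⟨l.get, fun i => hH _ (List.get_mem l i),
      by simpa [List.ofFn_getElem_eq_map] using hprod⟩

theorem isRTF_iff {H : Subgroup G} {n : ℕ∞} :
    IsRTF H n ↔ ∀ g ∉ H, ∀ cs : List G, cs ≠ [] → (∀ c ∈ cs, c ∈ H) →
      (cs.length : ℕ∞) + 1 < n → interleavedProd g cs ∉ H := by
  simp only [IsRTF, isRelTorsion_iff]
  constructor
  · intro h g hg cs hne hcs hn hmem
    refine h (cs.length + 1) ?_ (by simpa using hn) g
      ⟨hg, cs ++ [(interleavedProd g cs)⁻¹], by simp, ?_, ?_⟩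
    · have := List.length_pos_of_ne_nil hne
      omega
    · simpa [or_imp, forall_and] using ⟨hcs, hmem⟩
    · simp [← prod_map_mul_mul_eq_interleavedProd]
  · rintro h k hk hn g ⟨hg, l, rfl, hl, hprod⟩
    obtain ⟨cs, c, rfl⟩ := l.eq_nil_or_concat'.resolve_left (by rintro rfl; simp at hk)
    simp only [List.length_append, List.length_singleton] at hk hn
    have hc : interleavedProd g cs * c = 1 := by
      simpa [← prod_map_mul_mul_eq_interleavedProd, mul_assoc] using hprod
    refine h g hg cs ?_ (fun x hx => hl x (by simp [hx])) (by simpa using hn) ?_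
    · rintro rfl
      simp at hk
    · rw [eq_inv_of_mul_eq_one_left hc]
      exact inv_mem (hl c (by simp))

end InterleavedProd

namespace HNNExtension

variable {V : Type*} [Group V] {A B : Subgroup V} {φ : A ≃* B}

variable (A B) in
def NoPinch (δ : ℤˣ) (y : V) (η : ℤˣ) : Prop :=
  y ∈ toSubgroup A B δ → δ = η

theorem noPinch_self (δ : ℤˣ) (y : V) : NoPinch A B δ y δ := fun _ => rfl

variable (A B) in
/-- `IsReducedBetween A B δ y [(u₁, v₁), …, (uₘ, vₘ)] η`: the word
`t^δ y t^u₁ v₁ ⋯ t^uₘ vₘ t^η` contains no pinch `t^u x t^(-u)` with `x ∈ toSubgroup A B u`. -/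
def IsReducedBetween : ℤˣ → V → List (ℤˣ × V) → ℤˣ → Prop
  | δ, y, [], η => NoPinch A B δ y η
  | δ, y, (u, v) :: N, η => NoPinch A B δ y u ∧ IsReducedBetween u v N η

theorem isReducedBetween_append_cons {δ η ε : ℤˣ} {y x : V} {N N' : List (ℤˣ × V)} :
    IsReducedBetween A B δ y (N ++ (η, x) :: N') ε ↔
      IsReducedBetween A B δ y N η ∧ IsReducedBetween A B η x N' ε := by
  induction N generalizing δ y with
  | nil => rfl
  | cons p N ih => simp [IsReducedBetween, ih, and_assoc]

theorem isReducedBetween_of_forall_fst_eq {δ γ : ℤˣ} {y : V} {N : List (ℤˣ × V)}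
    (hy : NoPinch A B δ y γ) (hN : ∀ p ∈ N, p.1 = γ) : IsReducedBetween A B δ y N γ := by
  induction N generalizing δ y with
  | nil => exact hy
  | cons p N ih =>
    obtain ⟨u, v⟩ := p
    obtain rfl : u = γ := hN _ List.mem_cons_self
    exact ⟨hy, ih (noPinch_self u v) fun p hp => hN p (List.mem_cons_of_mem _ hp)⟩

theorem IsReducedBetween.isChain {δ η : ℤˣ} {y : V} {N : List (ℤˣ × V)}
    (h : IsReducedBetween A B δ y N η) : N.IsChain fun a b => NoPinch A B a.1 a.2 b.1 := by
  induction N generalizing δ y with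
  | nil => exact List.isChain_nil
  | cons p N ih =>
    rcases N with _ | ⟨q, N⟩
    · exact List.isChain_singleton _
    · exact List.isChain_cons_cons.2 ⟨h.2.1, ih h.2⟩

theorem exists_isReducedBetween_of_isChain {δ : ℤˣ} {y : V} {N : List (ℤˣ × V)}
    (h : ((δ, y) :: N).IsChain fun a b => NoPinch A B a.1 a.2 b.1) :
    ∃ η, IsReducedBetween A B δ y N η := by
  induction N generalizing δ y with
  | nil => exact ⟨δ, noPinch_self δ y⟩
  | cons p N ih =>
    obtain ⟨hp, hN⟩ := List.isChain_cons_cons.1 h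
    obtain ⟨η, hη⟩ := ih hN
    exact ⟨η, hp, hη⟩

variable (φ) in
def wordProd (N : List (ℤˣ × V)) : HNNExtension V A B φ :=
  (N.map fun p => t ^ (p.1 : ℤ) * of p.2).prod

@[simp]
theorem wordProd_nil : wordProd φ [] = 1 := rfl

@[simp]
theorem wordProd_cons (u : ℤˣ) (v : V) (N : List (ℤˣ × V)) :
    wordProd φ ((u, v) :: N) = t ^ (u : ℤ) * of v * wordProd φ N := by
  simp [wordProd]

@[simp]
theorem wordProd_append (N N' : List (ℤˣ × V)) :
    wordProd φ (N ++ N') = wordProd φ N * wordProd φ N' := by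
  simp [wordProd]

theorem exists_isChain_of_mul_wordProd_eq (g : HNNExtension V A B φ) :
    ∃ (y : V) (N : List (ℤˣ × V)),
      (N.IsChain fun a b => NoPinch A B a.1 a.2 b.1) ∧ of y * wordProd φ N = g := by
  obtain ⟨d⟩ := NormalWord.TransversalPair.nonempty V A B
  let w := NormalWord.equiv φ d g
  exact ⟨w.head, w.toList, w.chain, (NormalWord.equiv φ d).symm_apply_apply g⟩

variable (φ) in
theorem of_mul_wordProd_notMem_range {δ η : ℤˣ} {y : V} {N : List (ℤˣ × V)}
    (h : IsReducedBetween A B δ y N η) (hN : N ≠ []) :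
    of y * wordProd φ N ∉ (of : V →* HNNExtension V A B φ).range :=
  fun hmem => hN (ReducedWord.toList_eq_nil_of_mem_of_range φ ⟨y, N, h.isChain⟩ hmem)

def HasReducedFormBetween (δ η : ℤˣ) (g : HNNExtension V A B φ) : Prop :=
  ∃ (y : V) (N : List (ℤˣ × V)), IsReducedBetween A B δ y N η ∧ of y * wordProd φ N = g

/-- The letters that can stand between two copies of a word reduced between `t^δ` and `t^η`:
a junction `t^η x t^δ` that does not pinch, or what a pinched one collapses to. -/
def IsSeparator (δ η : ℤˣ) (s : HNNExtension V A B φ) : Prop :=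
  s ∈ (toSubgroup A B δ).map of ∨
    ∃ x, NoPinch A B η x δ ∧ s = t ^ (η : ℤ) * of x * t ^ (δ : ℤ)

theorem isSeparator_zpow_mul_of_mul_zpow (δ η : ℤˣ) (x : V) :
    IsSeparator δ η (t ^ (η : ℤ) * of x * t ^ (δ : ℤ) : HNNExtension V A B φ) := by
  by_cases h : NoPinch A B η x δ
  · exact .inr ⟨x, h, rfl⟩
  obtain ⟨hx, hne⟩ := Classical.not_imp.1 h
  obtain rfl : δ = -η := (Int.units_ne_iff_eq_neg.1 (Ne.symm hne))
  refine .inl ?_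
  rcases Int.units_eq_one_or η with rfl | rfl
  · exact ⟨φ ⟨x, hx⟩, (φ ⟨x, hx⟩).2, by simp [equiv_eq_conj]⟩
  · exact ⟨φ.symm ⟨x, hx⟩, (φ.symm ⟨x, hx⟩).2, by simp [equiv_symm_eq_conj]⟩

theorem HasReducedFormBetween.mul_mul_of_noPinch {δ η : ℤˣ} {P Q : HNNExtension V A B φ}
    {x : V} (hP : HasReducedFormBetween δ η P) (hx : NoPinch A B η x δ)
    (hQ : HasReducedFormBetween δ η Q) :
    HasReducedFormBetween δ η (P * (t ^ (η : ℤ) * of x * t ^ (δ : ℤ)) * Q) := by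
  obtain ⟨y, N, hN, rfl⟩ := hP
  obtain ⟨y', N', hN', rfl⟩ := hQ
  refine ⟨y, N ++ (η, x) :: (δ, y') :: N', isReducedBetween_append_cons.2 ⟨hN, hx, hN'⟩, ?_⟩
  simp [mul_assoc]

theorem hasReducedFormBetween_interleavedProd_of_forall_isSeparator {n : ℕ∞} {δ η : ℤˣ}
    {u : HNNExtension V A B φ}
    (h : ∀ ss : List (HNNExtension V A B φ), (∀ s ∈ ss, s ∈ (toSubgroup A B δ).map of) →
      (ss.length : ℕ∞) + 1 < n → HasReducedFormBetween δ η (interleavedProd u ss))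
    (ss : List (HNNExtension V A B φ)) (hss : ∀ s ∈ ss, IsSeparator δ η s)
    (hn : (ss.length : ℕ∞) + 1 < n) : HasReducedFormBetween δ η (interleavedProd u ss) := by
  induction' hm : ss.length using Nat.strong_induction_on with m ih generalizing ss
  subst hm
  by_cases hall : ∀ s ∈ ss, s ∈ (toSubgroup A B δ).map of
  · exact h ss hall hn
  push Not at hall
  obtain ⟨s, hs, hsδ⟩ := hall
  obtain ⟨x, hx, rfl⟩ := (hss s hs).resolve_left hsδ
  obtain ⟨ss₁, ss₂, rfl⟩ := List.append_of_mem hs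
  simp only [List.length_append, List.length_cons] at hn ih
  rw [interleavedProd_append_cons]
  refine (ih _ (by omega) ss₁ (fun s hs => hss s (by simp [hs])) (lt_of_le_of_lt ?_ hn)
    rfl).mul_mul_of_noPinch hx
    (ih _ (by omega) ss₂ (fun s hs => hss s (by simp [hs])) (lt_of_le_of_lt ?_ hn) rfl)
  all_goals gcongr; omega

theorem hasReducedFormBetween_interleavedProd_of_isRTF {n : ℕ∞} {δ η : ℤˣ} {y : V}
    (hS : IsRTF (toSubgroup A B δ) n) (hy : NoPinch A B δ y η)
    {ss : List (HNNExtension V A B φ)} (hss : ∀ s ∈ ss, s ∈ (toSubgroup A B δ).map of)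
    (hn : (ss.length : ℕ∞) + 1 < n) : HasReducedFormBetween δ η (interleavedProd (of y) ss) := by
  obtain ⟨cs, rfl⟩ : ss ∈ Set.range (List.map fun c : toSubgroup A B δ => of (c : V)) := by
    rw [Set.range_list_map]
    intro s hs
    obtain ⟨c, hc, rfl⟩ := hss s hs
    exact ⟨⟨c, hc⟩, rfl⟩
  refine ⟨interleavedProd y (cs.map (↑)), [], fun hmem => ?_, by simp [map_interleavedProd]⟩
  by_contra hne
  have hy' : y ∉ toSubgroup A B δ := fun h => hne (hy h)
  rcases eq_or_ne cs [] with rfl | hcs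
  · exact hy' hmem
  · refine isRTF_iff.1 hS y hy' _ (mt List.map_eq_nil_iff.1 hcs) (fun c hc => ?_)
      (by simpa using hn) hmem
    obtain ⟨c, -, rfl⟩ := List.mem_map.1 hc
    exact c.2

theorem exists_interleavedProd_of_mul_zpow_mul_of {δ η γ : ℤˣ} {a b : V}
    (ha : NoPinch A B δ a γ) (hb : NoPinch A B γ b η) {ss : List (HNNExtension V A B φ)}
    (hss : ∀ s ∈ ss, s ∈ (of : V →* HNNExtension V A B φ).range) :
    ∃ (y : V) (N : List (ℤˣ × V)), N ≠ [] ∧ IsReducedBetween A B δ y N η ∧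
      of y * wordProd φ N = interleavedProd (of a * t ^ (γ : ℤ) * of b) ss := by
  suffices ∃ L : List (ℤˣ × V), (∀ p ∈ L, p.1 = γ) ∧
      of a * wordProd φ (L ++ [(γ, b)]) = interleavedProd (of a * t ^ (γ : ℤ) * of b) ss by
    obtain ⟨L, hL, h⟩ := this
    exact ⟨a, L ++ [(γ, b)], by simp,
      isReducedBetween_append_cons.2 ⟨isReducedBetween_of_forall_fst_eq ha hL, hb⟩, h⟩
  induction ss with
  | nil => exact ⟨[], by simp, by simp [mul_assoc]⟩
  | cons s ss ih =>
    obtain ⟨c, rfl⟩ := hss s List.mem_cons_self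
    obtain ⟨L, hL, h⟩ := ih fun s hs => hss s (List.mem_cons_of_mem _ hs)
    refine ⟨(γ, b * c * a) :: L, by simpa using hL, ?_⟩
    rw [interleavedProd_cons, ← h]
    simp [mul_assoc]

variable (φ) in
def InterleavedProdReduced (n : ℕ∞) (N : List (ℤˣ × V)) : Prop :=
  ∀ δ η y, IsReducedBetween A B δ y N η → ∀ ss : List (HNNExtension V A B φ),
    (∀ s ∈ ss, IsSeparator δ η s) → (ss.length : ℕ∞) + 1 < n →
      HasReducedFormBetween δ η (interleavedProd (of y * wordProd φ N) ss)

theorem exists_interleavedProd_of_mul_wordProd {n : ℕ∞} {δ η : ℤˣ} {y : V}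
    {N : List (ℤˣ × V)}
    (hshorter : ∀ N' : List (ℤˣ × V), N'.length < N.length → InterleavedProdReduced φ n N')
    (hN : IsReducedBetween A B δ y N η) (hne : N ≠ []) {ss : List (HNNExtension V A B φ)}
    (hss : ∀ s ∈ ss, s ∈ (of : V →* HNNExtension V A B φ).range)
    (hn : (ss.length : ℕ∞) + 1 < n) :
    ∃ (y' : V) (N' : List (ℤˣ × V)), N' ≠ [] ∧ IsReducedBetween A B δ y' N' η ∧
      of y' * wordProd φ N' = interleavedProd (of y * wordProd φ N) ss := by
  obtain ⟨⟨γ, v⟩, N, rfl⟩ := List.exists_cons_of_ne_nil hne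
  rcases N.eq_nil_or_concat' with rfl | ⟨N₂, ⟨γ', v'⟩, rfl⟩
  · rw [show of y * wordProd φ [(γ, v)] = of y * t ^ (γ : ℤ) * of v by simp [mul_assoc]]
    exact exists_interleavedProd_of_mul_zpow_mul_of hN.1 hN.2 hss
  simp only [IsReducedBetween, isReducedBetween_append_cons] at hN
  obtain ⟨hy, hN₂, hv'⟩ := hN
  -- between copies of `y t^γ (v ⋯) t^γ' v'` the junction `t^γ' (v' c y) t^γ` separates inner words
  have hsep : ∀ s ∈ ss.map (t ^ (γ' : ℤ) * of v' * · * (of y * t ^ (γ : ℤ))),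
      IsSeparator γ γ' s := by
    simp only [List.forall_mem_map]
    intro s hs
    obtain ⟨c, rfl⟩ := hss s hs
    simpa [mul_assoc] using isSeparator_zpow_mul_of_mul_zpow (φ := φ) γ γ' (v' * c * y)
  obtain ⟨y₂, N₂', hN₂', hP⟩ := hshorter N₂ (by simp) γ γ' v hN₂ _ hsep (by simpa using hn)
  refine ⟨y, (γ, y₂) :: (N₂' ++ [(γ', v')]), by simp,
    ⟨hy, isReducedBetween_append_cons.2 ⟨hN₂', hv'⟩⟩, ?_⟩
  have hu : of y * wordProd φ ((γ, v) :: (N₂ ++ [(γ', v')])) =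
      of y * t ^ (γ : ℤ) * (of v * wordProd φ N₂) * (t ^ (γ' : ℤ) * of v') := by
    simp [mul_assoc]
  rw [hu, interleavedProd_mul_mul, ← hP]
  simp [mul_assoc]

theorem interleavedProdReduced {n : ℕ∞} (hS : ∀ ζ, IsRTF (toSubgroup A B ζ) n)
    (N : List (ℤˣ × V)) : InterleavedProdReduced φ n N := by
  intro δ η y hN
  refine hasReducedFormBetween_interleavedProd_of_forall_isSeparator fun ss hss hn => ?_
  rcases eq_or_ne N [] with rfl | hne
  · simpa using hasReducedFormBetween_interleavedProd_of_isRTF (hS δ) hN hss hn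
  · obtain ⟨y', N', -, h⟩ := exists_interleavedProd_of_mul_wordProd
      (fun N' _ => interleavedProdReduced hS N') hN hne
      (fun s hs => Subgroup.map_le_range _ _ (hss s hs)) hn
    exact ⟨y', N', h⟩
termination_by N.length

end HNNExtension

theorem isRTF_HNN_of_isRTF_general {V : Type*} [Group V] (A B : Subgroup V) (φ : A ≃* B)
    (n : ℕ∞)
    (hA : IsRTF A n) (hB : IsRTF B n) :
    IsRTF ((HNNExtension.of : V →* HNNExtension V A B φ).range) n := by
  have hS : ∀ ζ : ℤˣ, IsRTF (HNNExtension.toSubgroup A B ζ) n := fun ζ => by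
    rcases Int.units_eq_one_or ζ with rfl | rfl
    exacts [hA, hB]
  refine isRTF_iff.2 fun g hg cs _ hcs hn hT => ?_
  obtain ⟨y, N, hN, rfl⟩ := HNNExtension.exists_isChain_of_mul_wordProd_eq g
  obtain ⟨⟨δ, v⟩, N, rfl⟩ := List.exists_cons_of_ne_nil (show N ≠ [] by rintro rfl; simp at hg)
  obtain ⟨η, hN⟩ := HNNExtension.exists_isReducedBetween_of_isChain hN
  obtain ⟨y', N', hne, hN', hT'⟩ := HNNExtension.exists_interleavedProd_of_mul_wordProd
    (fun N' _ => HNNExtension.interleavedProdReduced hS N')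
    (N := (δ, v) :: N) ⟨HNNExtension.noPinch_self δ y, hN⟩ (List.cons_ne_nil _ _) hcs hn
  exact HNNExtension.of_mul_wordProd_notMem_range φ hN' hne (hT' ▸ hT)

/-- Let `G = V∗_φ` be the HNN extension associated to an isomorphism `φ : A ≃* B` between
subgroups `A, B ≤ V`, and let `3 ≤ n ≤ ∞`.  If the pairs `(V, A)` and `(V, B)` are
`n`-relatively torsion-free, then so is the pair `(G, V)`, where `V` is regarded as a
subgroup of `G` via the canonical embedding. -/
theorem isRTF_HNN_of_isRTF {V : Type*} [Group V] (A B : Subgroup V) (φ : A ≃* B)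
    (n : ℕ∞) (hn : 3 ≤ n)
    (hA : IsRTF A n) (hB : IsRTF B n) :
    IsRTF ((HNNExtension.of : V →* HNNExtension V A B φ).range) n :=
  isRTF_HNN_of_isRTF_general A B φ n hA hB
end

section
/- Let G be a finitely generated group, let H ≤ G be a subgroup admitting a symmetric Følner sequence (in particular H is amenable), and let φ : G → ℝ be a quasimorphism. Then there is a quasimorphism φ_H : G → ℝ such that: (i) φ_H(g⁻¹) = −φ_H(g) for all g ∈ G; (ii) sup_{g∈G} |φ_H(g) − φ(g)| ≤ 3·D(φ); (iii) φ_H is defect minimizing, i.e. D(φ_H) ≤ D(ψ) for every quasimorphism ψ on G with sup_{g∈G} |ψ(g) − φ(g)| < ∞; and (iv) φ_H(gh) = φ_H(g) + φ_H(h) = φ_H(hg) for all g ∈ G and h ∈ H. In particular, φ_H restricted to H is a homomorphism and equals there the homogenization h ↦ lim_{n→∞} φ(hⁿ)/n of φ. -/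
/-!
Let `φ̄` be the homogenization of `φ`; it lies within `D(φ)` of `φ`, and it is additive on `H`
because the Følner mean of its increments `x ↦ φ̄ (c x) - φ̄ x` is a homomorphism on `H` at
bounded distance from the homogeneous function `φ̄`. Averaging a quasimorphism `ψ` close to
`φ̄` on both sides over `H`, `ψ̃ g = m_x m_y (ψ (x g y) - φ̄ x - φ̄ y)` with `m` an ultralimit
of Følner averages, does not increase the defect and gives `ψ̃ (g h) = ψ̃ g + φ̄ h = ψ̃ (h g)`
for `h ∈ H`. Apply this to a defect minimizer of the class of `φ` (a pointwise ultralimit of a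
minimizing sequence) and take the odd part `g ↦ (ψ̃ g - ψ̃ g⁻¹) / 2`. Since every
quasimorphism lies within its defect of its homogenization, the result is within `2 D(φ)` of
`φ`.
-/

open Filter Topology

section QM

variable {G : Type*} [Group G]

/-- `φ : G → ℝ` is a quasimorphism: the quantity `|φ g + φ h - φ (g h)|` is uniformly
bounded. -/
def IsQuasimorphism (φ : G → ℝ) : Prop :=
  ∃ D : ℝ, ∀ g h : G, |φ g + φ h - φ (g * h)| ≤ D

/-- The defect `D(φ) = sup_{g,h} |φ g + φ h - φ (g h)|` of a quasimorphism, realized as the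
least uniform bound. -/
noncomputable def defect (φ : G → ℝ) : ℝ :=
  sInf {D : ℝ | ∀ g h : G, |φ g + φ h - φ (g * h)| ≤ D}

/-- `F` is a symmetric Følner sequence for the subgroup `H ≤ G`:  a nested sequence of
finite symmetric subsets of `H` exhausting `H`, such that `|h F_k Δ F_k| / |F_k| → 0` for
every `h ∈ H`. -/
def IsSymmetricFolnerSeq [DecidableEq G] (H : Subgroup G) (F : ℕ → Finset G) : Prop :=
  (∀ k, (F k : Set G) ⊆ (H : Set G)) ∧
  (∀ k, F k ⊆ F (k + 1)) ∧
  (∀ k, ∀ x, x ∈ F k ↔ x⁻¹ ∈ F k) ∧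
  (∀ h ∈ H, ∃ k, h ∈ F k) ∧
  (∀ h ∈ H, Tendsto
    (fun k : ℕ => ((symmDiff ((F k).image (fun x => h * x)) (F k)).card : ℝ) / ((F k).card : ℝ))
    atTop (𝓝 0))

end QM

open Finset

section Quasimorphism

variable {G : Type*} [Group G]

def IsQuasimorphismWith (D : ℝ) (φ : G → ℝ) : Prop :=
  ∀ g h : G, |φ g + φ h - φ (g * h)| ≤ D

def IsBoundedFun {α : Type*} (f : α → ℝ) : Prop :=
  ∃ C, ∀ x, |f x| ≤ C

variable {φ : G → ℝ} {D : ℝ}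

lemma IsQuasimorphismWith.nonneg (hφ : IsQuasimorphismWith D φ) : 0 ≤ D :=
  (abs_nonneg _).trans (hφ 1 1)

lemma IsQuasimorphism.isQuasimorphismWith_defect (hφ : IsQuasimorphism φ) :
    IsQuasimorphismWith (defect φ) φ :=
  fun g h => le_csInf hφ fun _ hD => hD g h

lemma IsQuasimorphismWith.defect_le (hφ : IsQuasimorphismWith D φ) : defect φ ≤ D :=
  csInf_le ⟨0, fun _ hD => (abs_nonneg _).trans (hD 1 1)⟩ hφ

lemma IsQuasimorphismWith.abs_pow_succ_sub_le (hφ : IsQuasimorphismWith D φ) (g : G) (n : ℕ) :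
    |φ (g ^ (n + 1)) - (n + 1) * φ g| ≤ n * D := by
  induction n with
  | zero => simp
  | succ n ih =>
    have h := hφ (g ^ (n + 1)) g
    rw [← pow_succ] at h
    calc |φ (g ^ (n + 1 + 1)) - ((n + 1 : ℕ) + 1) * φ g|
        = |(φ (g ^ (n + 1)) - (n + 1) * φ g)
            - (φ (g ^ (n + 1)) + φ g - φ (g ^ (n + 1 + 1)))| := by
          push_cast; ring_nf
      _ ≤ n * D + D := (abs_sub _ _).trans (add_le_add ih h)
      _ = (n + 1 : ℕ) * D := by push_cast; ring

end Quasimorphism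

section BoundedFun

variable {α : Type*} {f g : α → ℝ}

lemma isBoundedFun_const (c : ℝ) : IsBoundedFun fun _ : α => c := ⟨|c|, fun _ => le_rfl⟩

lemma IsBoundedFun.of_abs_sub_le {c B : ℝ} (h : ∀ x, |f x - c| ≤ B) : IsBoundedFun f :=
  ⟨B + |c|, fun x => by simpa using (abs_add_le (f x - c) c).trans (add_le_add (h x) le_rfl)⟩

lemma IsBoundedFun.add (hf : IsBoundedFun f) (hg : IsBoundedFun g) :
    IsBoundedFun fun x => f x + g x := by
  obtain ⟨B, hB⟩ := hf
  obtain ⟨C, hC⟩ := hg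
  exact ⟨B + C, fun x => (abs_add_le _ _).trans (add_le_add (hB x) (hC x))⟩

lemma IsBoundedFun.neg (hf : IsBoundedFun f) : IsBoundedFun fun x => -f x := by
  simpa only [IsBoundedFun, abs_neg] using hf

lemma IsBoundedFun.sub (hf : IsBoundedFun f) (hg : IsBoundedFun g) :
    IsBoundedFun fun x => f x - g x := by
  simpa only [sub_eq_add_neg] using hf.add hg.neg

lemma IsBoundedFun.comp {β : Type*} (hf : IsBoundedFun f) (k : β → α) :
    IsBoundedFun fun x => f (k x) := by
  obtain ⟨B, hB⟩ := hf
  exact ⟨B, fun x => hB (k x)⟩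

end BoundedFun

section UltraLim

-- Only meaningful for bounded sequences: `limUnder` of a divergent one is a junk value.
noncomputable def ultraLim (u : ℕ → ℝ) : ℝ :=
  limUnder (Ultrafilter.of (atTop : Filter ℕ) : Filter ℕ) u

variable {u v : ℕ → ℝ}

lemma tendsto_ultraLim (hu : IsBoundedFun u) :
    Tendsto u (Ultrafilter.of (atTop : Filter ℕ)) (𝓝 (ultraLim u)) := by
  obtain ⟨B, hB⟩ := hu
  refine tendsto_nhds_limUnder ?_
  obtain ⟨L, -, hL⟩ := (isCompact_Icc (a := -B) (b := B)).ultrafilter_le_nhds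
    ((Ultrafilter.of atTop).map u)
    (le_principal_iff.2 (mem_map.2 (univ_mem' fun n => abs_le.1 (hB n))))
  exact ⟨L, hL⟩

lemma ultraLim_eq {L : ℝ} (h : Tendsto u (Ultrafilter.of (atTop : Filter ℕ)) (𝓝 L)) :
    ultraLim u = L :=
  h.limUnder_eq

lemma ultraLim_eq_of_tendsto {L : ℝ} (h : Tendsto u atTop (𝓝 L)) : ultraLim u = L :=
  ultraLim_eq (h.mono_left (Ultrafilter.of_le _))

lemma abs_ultraLim_le {B : ℝ} (hu : ∀ n, |u n| ≤ B) : |ultraLim u| ≤ B :=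
  le_of_tendsto' (tendsto_ultraLim ⟨B, hu⟩).abs hu

lemma ultraLim_add (hu : IsBoundedFun u) (hv : IsBoundedFun v) :
    ultraLim (fun n => u n + v n) = ultraLim u + ultraLim v :=
  ultraLim_eq ((tendsto_ultraLim hu).add (tendsto_ultraLim hv))

lemma ultraLim_sub (hu : IsBoundedFun u) (hv : IsBoundedFun v) :
    ultraLim (fun n => u n - v n) = ultraLim u - ultraLim v :=
  ultraLim_eq ((tendsto_ultraLim hu).sub (tendsto_ultraLim hv))

lemma ultraLim_eq_of_tendsto_sub (hu : IsBoundedFun u) (hv : IsBoundedFun v)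
    (h : Tendsto (fun n => u n - v n) atTop (𝓝 0)) : ultraLim u = ultraLim v := by
  rw [← sub_eq_zero, ← ultraLim_sub hu hv, ultraLim_eq_of_tendsto h]

lemma abs_ultraLim_le_of_tendsto {u b : ℕ → ℝ} {B : ℝ} (hu : IsBoundedFun u)
    (hub : ∀ n, |u n| ≤ b n) (hb : Tendsto b atTop (𝓝 B)) : |ultraLim u| ≤ B :=
  le_of_tendsto_of_tendsto' (tendsto_ultraLim hu).abs (hb.mono_left (Ultrafilter.of_le _)) hub

end UltraLim

lemma Finset.abs_sum_sub_sum_le_card_symmDiff {α : Type*} [DecidableEq α] {f : α → ℝ} {B : ℝ}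
    (hf : ∀ x, |f x| ≤ B) (s t : Finset α) :
    |∑ x ∈ s, f x - ∑ x ∈ t, f x| ≤ B * #(symmDiff s t) := by
  rw [← sum_sdiff_sub_sum_sdiff]
  calc |∑ x ∈ s \ t, f x - ∑ x ∈ t \ s, f x|
      ≤ ∑ x ∈ s \ t, |f x| + ∑ x ∈ t \ s, |f x| :=
        (abs_sub _ _).trans (add_le_add (abs_sum_le_sum_abs _ _) (abs_sum_le_sum_abs _ _))
    _ = ∑ x ∈ symmDiff s t, |f x| := by rw [symmDiff_def, sup_eq_union,
        sum_union disjoint_sdiff_sdiff]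
    _ ≤ B * #(symmDiff s t) := by
        rw [mul_comm, ← nsmul_eq_mul]
        exact sum_le_card_nsmul _ _ _ fun x _ => hf x

section FolnerMean

variable {G : Type*} [Group G]

noncomputable def folnerAvg (F : ℕ → Finset G) (f : G → ℝ) (k : ℕ) : ℝ :=
  (∑ x ∈ F k, f x) / #(F k)

noncomputable def folnerMean (F : ℕ → Finset G) (f : G → ℝ) : ℝ :=
  ultraLim (folnerAvg F f)

variable {F : ℕ → Finset G} {f f' : G → ℝ}

lemma abs_folnerAvg_le {B : ℝ} (hf : ∀ x, |f x| ≤ B) (k : ℕ) : |folnerAvg F f k| ≤ B := by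
  rw [folnerAvg, abs_div, Nat.abs_cast]
  refine div_le_of_le_mul₀ (Nat.cast_nonneg _) ((abs_nonneg _).trans (hf 1)) ?_
  calc |∑ x ∈ F k, f x| ≤ ∑ x ∈ F k, |f x| := abs_sum_le_sum_abs _ _
    _ ≤ #(F k) • B := sum_le_card_nsmul _ _ _ fun x _ => hf x
    _ = B * #(F k) := by rw [nsmul_eq_mul, mul_comm]

lemma IsBoundedFun.folnerAvg (hf : IsBoundedFun f) : IsBoundedFun (folnerAvg F f) := by
  obtain ⟨B, hB⟩ := hf
  exact ⟨B, abs_folnerAvg_le hB⟩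

lemma abs_folnerMean_le {B : ℝ} (hf : ∀ x, |f x| ≤ B) : |folnerMean F f| ≤ B :=
  abs_ultraLim_le (abs_folnerAvg_le hf)

lemma folnerMean_add (hf : IsBoundedFun f) (hf' : IsBoundedFun f') :
    folnerMean F (fun x => f x + f' x) = folnerMean F f + folnerMean F f' := by
  unfold folnerMean
  rw [← ultraLim_add hf.folnerAvg hf'.folnerAvg]
  congr with k
  simp only [folnerAvg, sum_add_distrib, add_div]

lemma folnerMean_sub (hf : IsBoundedFun f) (hf' : IsBoundedFun f') :
    folnerMean F (fun x => f x - f' x) = folnerMean F f - folnerMean F f' := by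
  unfold folnerMean
  rw [← ultraLim_sub hf.folnerAvg hf'.folnerAvg]
  congr with k
  simp only [folnerAvg, sum_sub_distrib, sub_div]

section Folner

variable [DecidableEq G] {H : Subgroup G} (hF : IsSymmetricFolnerSeq H F)
include hF

lemma IsSymmetricFolnerSeq.eventually_nonempty : ∀ᶠ k in atTop, (F k).Nonempty := by
  obtain ⟨K, hK⟩ := hF.2.2.2.1 1 H.one_mem
  exact eventually_atTop.2 ⟨K, fun k hk => ⟨1, monotone_nat_of_le_succ hF.2.1 hk hK⟩⟩

lemma folnerMean_const (c : ℝ) : folnerMean F (fun _ => c) = c := by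
  refine ultraLim_eq_of_tendsto (tendsto_const_nhds.congr' ?_)
  filter_upwards [hF.eventually_nonempty] with k hk
  rw [folnerAvg, sum_const, nsmul_eq_mul, mul_div_cancel_left₀ _ (by simpa using hk.ne_empty)]

lemma folnerMean_add_const (hf : IsBoundedFun f) (c : ℝ) :
    folnerMean F (fun x => f x + c) = folnerMean F f + c := by
  rw [folnerMean_add hf (isBoundedFun_const c), folnerMean_const hF]

lemma folnerMean_sub_const {f : G → ℝ} (hf : IsBoundedFun f) (c : ℝ) :
    folnerMean F (fun x => f x - c) = folnerMean F f - c := by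
  rw [folnerMean_sub hf (isBoundedFun_const c), folnerMean_const hF]

lemma abs_folnerMean_sub_le {c B : ℝ} (hf : ∀ x, |f x - c| ≤ B) : |folnerMean F f - c| ≤ B := by
  have h := folnerMean_sub (F := F) (IsBoundedFun.of_abs_sub_le hf) (isBoundedFun_const c)
  rw [folnerMean_const hF] at h
  exact h ▸ abs_folnerMean_le hf

lemma folnerMean_congr (h : ∀ x ∈ H, f x = f' x) : folnerMean F f = folnerMean F f' := by
  unfold folnerMean folnerAvg
  congr with k
  rw [sum_congr rfl fun x hx => h x (hF.1 k hx)]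

lemma folnerMean_comp_inv (f : G → ℝ) : folnerMean F (fun x => f x⁻¹) = folnerMean F f := by
  unfold folnerMean folnerAvg
  congr with k
  congr 1
  exact sum_nbij' (·⁻¹) (·⁻¹) (fun x hx => (hF.2.2.1 k x).1 hx)
    (fun x hx => (hF.2.2.1 k x).1 hx) (fun x _ => inv_inv x) (fun x _ => inv_inv x)
    fun _ _ => rfl

lemma folnerMean_comp_mul_left (hf : IsBoundedFun f) {h : G} (hh : h ∈ H) :
    folnerMean F (fun x => f (h * x)) = folnerMean F f := by
  refine ultraLim_eq_of_tendsto_sub (hf.comp _).folnerAvg hf.folnerAvg ?_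
  obtain ⟨B, hB⟩ := hf
  have hFolner := (hF.2.2.2.2 h hh).const_mul B
  rw [mul_zero] at hFolner
  refine squeeze_zero_norm (fun k => ?_) hFolner
  rw [Real.norm_eq_abs, folnerAvg, folnerAvg, ← sub_div, abs_div, Nat.abs_cast, mul_div_assoc',
    ← sum_image (f := f) (s := F k) (g := (h * ·)) fun x _ y _ hxy => mul_left_cancel hxy]
  gcongr
  exact abs_sum_sub_sum_le_card_symmDiff hB _ _

lemma folnerMean_comp_mul_right (hf : IsBoundedFun f) {h : G} (hh : h ∈ H) :
    folnerMean F (fun x => f (x * h)) = folnerMean F f := by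
  rw [← folnerMean_comp_inv hF, ← folnerMean_comp_inv hF f,
    ← folnerMean_comp_mul_left hF (hf.comp (·⁻¹)) (H.inv_mem hh)]
  simp only [mul_inv_rev, inv_inv]

end Folner

end FolnerMean

section Homogenization

variable {G : Type*} [Group G] {φ ψ : G → ℝ} {D : ℝ}

noncomputable def homog (φ : G → ℝ) (g : G) : ℝ :=
  limUnder atTop fun n : ℕ => φ (g ^ n) / n

namespace IsQuasimorphismWith

variable (hφ : IsQuasimorphismWith D φ)
include hφ

lemma tendsto_homog (g : G) :
    Tendsto (fun n : ℕ => φ (g ^ n) / n) atTop (𝓝 (homog φ g)) := by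
  -- Fekete's lemma applied to the subadditive sequence `φ (g ^ n) + D`
  have hsub : Subadditive fun n => φ (g ^ n) + D := fun m n => by
    have := (abs_le.1 (hφ (g ^ m) (g ^ n))).1
    rw [← pow_add] at this
    linarith
  have hbdd : BddBelow (Set.range fun n : ℕ => (φ (g ^ n) + D) / n) := by
    refine ⟨-(|φ g| + D), Set.forall_mem_range.2 fun n => ?_⟩
    rcases n with _ | n
    · rw [Nat.cast_zero, div_zero, neg_nonpos]
      exact add_nonneg (abs_nonneg _) hφ.nonneg
    rw [le_div_iff₀ (by positivity)]
    have := (abs_le.1 (hφ.abs_pow_succ_sub_le g n)).1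
    push_cast
    nlinarith [neg_abs_le (φ g), hφ.nonneg, (n.cast_nonneg : (0 : ℝ) ≤ n)]
  have hlim : Tendsto (fun n : ℕ => φ (g ^ n) / n) atTop (𝓝 hsub.lim) := by
    simpa [add_div] using (hsub.tendsto_lim hbdd).sub (tendsto_const_div_atTop_nhds_zero_nat D)
  rwa [homog, hlim.limUnder_eq]

lemma abs_sub_homog_le (g : G) : |φ g - homog φ g| ≤ D := by
  have hlim := ((tendsto_add_atTop_iff_nat 1).2 (hφ.tendsto_homog g)).sub_const (φ g)
  rw [abs_sub_comm]
  refine le_of_tendsto' hlim.abs fun n => ?_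
  have hn : (0 : ℝ) < n + 1 := by positivity
  rw [Nat.cast_succ, div_sub' hn.ne', abs_div, abs_of_pos hn, div_le_iff₀ hn]
  nlinarith [hφ.abs_pow_succ_sub_le g n, hφ.nonneg]

lemma tendsto_homog_of_isBoundedFun_sub (hψφ : IsBoundedFun fun g => ψ g - φ g) (g : G) :
    Tendsto (fun n : ℕ => ψ (g ^ n) / n) atTop (𝓝 (homog φ g)) := by
  obtain ⟨C, hC⟩ := hψφ
  have hdiff : Tendsto (fun n : ℕ => ψ (g ^ n) / n - φ (g ^ n) / n) atTop (𝓝 0) := by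
    refine squeeze_zero_norm (fun n => ?_) (tendsto_const_div_atTop_nhds_zero_nat C)
    rw [Real.norm_eq_abs, ← sub_div, abs_div, Nat.abs_cast]
    exact div_le_div_of_nonneg_right (hC _) n.cast_nonneg
  simpa using hdiff.add (hφ.tendsto_homog g)

lemma homog_eq_of_isBoundedFun_sub (hψφ : IsBoundedFun fun g => ψ g - φ g) :
    homog ψ = homog φ :=
  funext fun g => (hφ.tendsto_homog_of_isBoundedFun_sub hψφ g).limUnder_eq

lemma homog_inv (g : G) : homog φ g⁻¹ = -homog φ g := by
  have hodd : IsBoundedFun fun g => -φ g⁻¹ - φ g :=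
    IsBoundedFun.of_abs_sub_le (c := -φ 1) fun g => by
      rw [← abs_neg]
      convert hφ g g⁻¹ using 2
      rw [mul_inv_cancel]
      ring
  have h := (hφ.tendsto_homog_of_isBoundedFun_sub hodd g).neg
  simp only [← inv_pow, neg_div, neg_neg] at h
  rw [(hφ.tendsto_homog g⁻¹).limUnder_eq.symm.trans h.limUnder_eq]

lemma homog_pow (g : G) (m : ℕ) : homog φ (g ^ m) = m * homog φ g := by
  rcases m.eq_zero_or_pos with rfl | hm
  · simpa [homog] using (tendsto_const_div_atTop_nhds_zero_nat (φ 1)).limUnder_eq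
  have hsubseq := ((hφ.tendsto_homog g).comp (tendsto_id.const_mul_atTop' hm)).const_mul (m : ℝ)
  refine (hsubseq.congr' ?_).limUnder_eq
  filter_upwards [eventually_gt_atTop 0] with n hn
  simp only [Function.comp_apply, id, ← pow_mul, Nat.cast_mul]
  field_simp

lemma homog_isQuasimorphismWith : IsQuasimorphismWith (4 * D) (homog φ) := fun g h => by
  have := hφ.abs_sub_homog_le
  obtain ⟨a1, a2⟩ := abs_le.1 (this g)
  obtain ⟨b1, b2⟩ := abs_le.1 (this h)
  obtain ⟨c1, c2⟩ := abs_le.1 (this (g * h))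
  obtain ⟨d1, d2⟩ := abs_le.1 (hφ g h)
  exact abs_le.2 ⟨by linarith, by linarith⟩

end IsQuasimorphismWith

lemma IsQuasimorphism.abs_sub_homog_le_defect (hψ : IsQuasimorphism ψ)
    (hφ : IsQuasimorphismWith D φ) (hψφ : IsBoundedFun fun g => ψ g - φ g) (g : G) :
    |ψ g - homog φ g| ≤ defect ψ := by
  rw [← hφ.homog_eq_of_isBoundedFun_sub hψφ]
  exact hψ.isQuasimorphismWith_defect.abs_sub_homog_le g

end Homogenization

section HomogeneousQuasimorphism

variable {G : Type*} [Group G] [DecidableEq G] {H : Subgroup G} {F : ℕ → Finset G}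

lemma IsQuasimorphismWith.map_mul_of_mem {χ : G → ℝ} {E : ℝ} (hχ : IsQuasimorphismWith E χ)
    (hF : IsSymmetricFolnerSeq H F) (hpow : ∀ g (n : ℕ), χ (g ^ n) = n * χ g) {a b : G}
    (ha : a ∈ H) (hb : b ∈ H) :
    χ (a * b) = χ a + χ b := by
  -- the mean of the increments `χ (c x) - χ x` is additive on `H` and close to `χ c`
  set l : G → ℝ := fun c => folnerMean F fun x => χ (c * x) - χ x
  have hincr : ∀ c x, |χ (c * x) - χ x - χ c| ≤ E := fun c x => by
    rw [← abs_neg]; convert hχ c x using 2; ring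
  have hl_add : ∀ c, ∀ d ∈ H, l (c * d) = l c + l d := fun c d hd => by
    have h := folnerMean_add (F := F) ((IsBoundedFun.of_abs_sub_le (hincr c)).comp (d * ·))
      (IsBoundedFun.of_abs_sub_le (hincr d))
    rw [folnerMean_comp_mul_left hF (IsBoundedFun.of_abs_sub_le (hincr c)) hd] at h
    simp only [l, ← h, mul_assoc, sub_add_sub_cancel]
  have hl_pow : ∀ c ∈ H, ∀ n : ℕ, l (c ^ n) = n * l c := fun c hc n => by
    induction n with
    | zero => simpa [l] using folnerMean_const hF 0
    | succ n ih => rw [pow_succ, hl_add _ c hc, ih]; push_cast; ring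
  have hl_eq : ∀ c ∈ H, l c = χ c := fun c hc => by
    have hclose : ∀ n : ℕ, n * |l c - χ c| ≤ E := fun n => by
      have h := abs_folnerMean_sub_le hF (F := F) (hincr (c ^ n))
      rwa [← Nat.abs_cast n, ← abs_mul, mul_sub, ← hl_pow c hc, ← hpow]
    by_contra hne
    obtain ⟨n, hn⟩ := exists_nat_gt (E / |l c - χ c|)
    have := (div_lt_iff₀ (abs_pos.2 (sub_ne_zero.2 hne))).1 hn
    linarith [hclose n]
  rw [← hl_eq a ha, ← hl_eq b hb, ← hl_eq _ (H.mul_mem ha hb), hl_add a b hb]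

end HomogeneousQuasimorphism

section BiMean

variable {G : Type*} [Group G]

noncomputable def sliceMean (F : ℕ → Finset G) (χ ψ : G → ℝ) (g x : G) : ℝ :=
  folnerMean F fun y => ψ (x * g * y) - χ x - χ y

noncomputable def biMean (F : ℕ → Finset G) (χ ψ : G → ℝ) (g : G) : ℝ :=
  folnerMean F (sliceMean F χ ψ g)

variable [DecidableEq G] {H : Subgroup G} {F : ℕ → Finset G} {χ ψ : G → ℝ} {E C : ℝ}
  (hF : IsSymmetricFolnerSeq H F) (hχ : IsQuasimorphismWith E χ) (hψχ : ∀ g, |ψ g - χ g| ≤ C)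

omit [DecidableEq G] in
include hχ hψχ in
lemma abs_mul_mul_sub_sub_le (g x y : G) :
    |ψ (x * g * y) - χ x - χ y - χ g| ≤ C + 2 * E := by
  obtain ⟨a1, a2⟩ := abs_le.1 (hψχ (x * g * y))
  obtain ⟨b1, b2⟩ := abs_le.1 (hχ (x * g) y)
  obtain ⟨c1, c2⟩ := abs_le.1 (hχ x g)
  exact abs_le.2 ⟨by linarith, by linarith⟩

include hF hχ hψχ

lemma abs_sliceMean_sub_le (g x : G) : |sliceMean F χ ψ g x - χ g| ≤ C + 2 * E :=
  abs_folnerMean_sub_le hF (abs_mul_mul_sub_sub_le hχ hψχ g x)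

lemma abs_biMean_sub_le (g : G) : |biMean F χ ψ g - χ g| ≤ C + 2 * E :=
  abs_folnerMean_sub_le hF (abs_sliceMean_sub_le hF hχ hψχ g)

lemma biMean_mul_right (hχH : ∀ a ∈ H, ∀ b ∈ H, χ (a * b) = χ a + χ b) (g : G) {h : G}
    (hh : h ∈ H) : biMean F χ ψ (g * h) = biMean F χ ψ g + χ h := by
  have hslice : ∀ x, sliceMean F χ ψ (g * h) x = sliceMean F χ ψ g x + χ h := fun x => by
    have hP := IsBoundedFun.of_abs_sub_le (abs_mul_mul_sub_sub_le hχ hψχ g x)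
    rw [sliceMean, sliceMean, ← folnerMean_comp_mul_left hF hP hh,
      ← folnerMean_add_const hF (hP.comp _)]
    refine folnerMean_congr hF fun y hy => ?_
    rw [hχH h hh y hy, ← mul_assoc x g, mul_assoc (x * g)]
    ring
  rw [biMean, biMean, funext hslice, folnerMean_add_const hF
    (IsBoundedFun.of_abs_sub_le (abs_sliceMean_sub_le hF hχ hψχ g))]

lemma biMean_mul_left (hχH : ∀ a ∈ H, ∀ b ∈ H, χ (a * b) = χ a + χ b) (g : G) {h : G}
    (hh : h ∈ H) : biMean F χ ψ (h * g) = biMean F χ ψ g + χ h := by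
  have hS := IsBoundedFun.of_abs_sub_le (abs_sliceMean_sub_le hF hχ hψχ g)
  have hslice : ∀ x ∈ H, sliceMean F χ ψ (h * g) x = sliceMean F χ ψ g (x * h) + χ h :=
    fun x hx => by
      rw [sliceMean, sliceMean, ← folnerMean_add_const hF
        (IsBoundedFun.of_abs_sub_le (abs_mul_mul_sub_sub_le hχ hψχ g (x * h)))]
      congr with y
      rw [hχH x hx h hh, mul_assoc x h g]
      ring
  rw [biMean, folnerMean_congr hF hslice, folnerMean_add_const hF (hS.comp (· * h)),
    folnerMean_comp_mul_right hF hS hh, biMean]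

lemma biMean_isQuasimorphismWith (hχ_inv : ∀ g, χ g⁻¹ = -χ g) {Dψ : ℝ}
    (hψ : IsQuasimorphismWith Dψ ψ) : IsQuasimorphismWith Dψ (biMean F χ ψ) := fun g g' => by
  have hP : ∀ g x, IsBoundedFun fun y => ψ (x * g * y) - χ x - χ y := fun g x =>
    IsBoundedFun.of_abs_sub_le (abs_mul_mul_sub_sub_le hχ hψχ g x)
  have hS : ∀ g, IsBoundedFun (sliceMean F χ ψ g) := fun g =>
    IsBoundedFun.of_abs_sub_le (abs_sliceMean_sub_le hF hχ hψχ g)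
  -- `T x y z` is the defect of `ψ` at `(x g y, y⁻¹ g' z)`, once `χ y⁻¹ = -χ y` is used
  set T : G → G → G → ℝ := fun x y z =>
    ((ψ (y⁻¹ * g' * z) - χ y⁻¹ - χ z) - (ψ (x * (g * g') * z) - χ x - χ z))
      + (ψ (x * g * y) - χ x - χ y)
  have hT : ∀ x y z, |T x y z| ≤ Dψ := fun x y z => by
    have hmul : x * g * y * (y⁻¹ * g' * z) = x * (g * g') * z := by group
    convert hψ (x * g * y) (y⁻¹ * g' * z) using 2
    rw [hmul]
    simp only [T, hχ_inv]
    ring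
  have hz : ∀ x y, folnerMean F (T x y)
      = sliceMean F χ ψ g' y⁻¹ - sliceMean F χ ψ (g * g') x + (ψ (x * g * y) - χ x - χ y) :=
    fun x y => by
      rw [folnerMean_add_const hF ((hP g' y⁻¹).sub (hP (g * g') x)),
        folnerMean_sub (hP g' y⁻¹) (hP (g * g') x)]
      rfl
  have hy : ∀ x, folnerMean F (fun y => folnerMean F (T x y))
      = sliceMean F χ ψ g x + biMean F χ ψ g' - sliceMean F χ ψ (g * g') x := fun x => by
    simp_rw [hz, sub_add_eq_add_sub, add_comm (sliceMean F χ ψ g' _)]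
    rw [folnerMean_sub_const hF ((hP g x).add ((hS g').comp _)),
      folnerMean_add (hP g x) ((hS g').comp _), folnerMean_comp_inv hF]
    rfl
  have hx : folnerMean F (fun x => folnerMean F fun y => folnerMean F (T x y))
      = biMean F χ ψ g + biMean F χ ψ g' - biMean F χ ψ (g * g') := by
    simp_rw [hy]
    rw [folnerMean_sub ((hS g).add (isBoundedFun_const _)) (hS (g * g')),
      folnerMean_add_const hF (hS g)]
    rfl
  rw [← hx]
  exact abs_folnerMean_le fun x => abs_folnerMean_le fun y => abs_folnerMean_le (hT x y)

end BiMean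

section OddPart

variable {G : Type*} [Group G] {f χ : G → ℝ}

noncomputable def oddPart (f : G → ℝ) (g : G) : ℝ := (f g - f g⁻¹) / 2

lemma oddPart_inv (f : G → ℝ) (g : G) : oddPart f g⁻¹ = -oddPart f g := by
  rw [oddPart, oddPart, inv_inv]; ring

lemma oddPart_one (f : G → ℝ) : oddPart f 1 = 0 := by
  simp [oddPart]

lemma IsQuasimorphismWith.oddPart {D : ℝ} (hf : IsQuasimorphismWith D f) :
    IsQuasimorphismWith D (oddPart f) := fun g h => by
  have key : _root_.oddPart f g + _root_.oddPart f h - _root_.oddPart f (g * h)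
      = ((f g + f h - f (g * h)) - (f h⁻¹ + f g⁻¹ - f (h⁻¹ * g⁻¹))) / 2 := by
    rw [_root_.oddPart, _root_.oddPart, _root_.oddPart, mul_inv_rev]; ring
  rw [key, abs_div, abs_two, div_le_iff₀ two_pos]
  linarith [abs_sub (f g + f h - f (g * h)) (f h⁻¹ + f g⁻¹ - f (h⁻¹ * g⁻¹)), hf g h, hf h⁻¹ g⁻¹]

variable (hχ_inv : ∀ g, χ g⁻¹ = -χ g)
include hχ_inv

lemma abs_oddPart_sub_le {C : ℝ} (hf : ∀ g, |f g - χ g| ≤ C) (g : G) :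
    |oddPart f g - χ g| ≤ C := by
  have key : oddPart f g - χ g = ((f g - χ g) - (f g⁻¹ - χ g⁻¹)) / 2 := by
    rw [oddPart, hχ_inv]; ring
  rw [key, abs_div, abs_two, div_le_iff₀ two_pos]
  linarith [abs_sub (f g - χ g) (f g⁻¹ - χ g⁻¹), hf g, hf g⁻¹]

lemma oddPart_mul_of_mem {H : Subgroup G}
    (hf : ∀ g, ∀ h ∈ H, f (g * h) = f g + χ h ∧ f (h * g) = f g + χ h) (g : G) {h : G}
    (hh : h ∈ H) :
    oddPart f (g * h) = oddPart f g + χ h ∧ oddPart f (h * g) = oddPart f g + χ h := by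
  have hh' := H.inv_mem hh
  constructor
  · rw [oddPart, oddPart, mul_inv_rev, (hf g h hh).1, (hf g⁻¹ h⁻¹ hh').2, hχ_inv]; ring
  · rw [oddPart, oddPart, mul_inv_rev, (hf g h hh).2, (hf g⁻¹ h⁻¹ hh').1, hχ_inv]; ring

end OddPart

section DefectMinimizer

variable {G : Type*} [Group G] {φ : G → ℝ}

lemma IsQuasimorphism.exists_defect_minimizing (hφ : IsQuasimorphism φ) :
    ∃ ρ : G → ℝ, IsQuasimorphism ρ ∧ IsBoundedFun (fun g => ρ g - φ g) ∧
      ∀ ψ : G → ℝ, IsQuasimorphism ψ → IsBoundedFun (fun g => ψ g - φ g) →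
        defect ρ ≤ defect ψ := by
  obtain ⟨D, hD⟩ := hφ
  set S : Set ℝ := defect '' {ψ | IsQuasimorphism ψ ∧ IsBoundedFun fun g => ψ g - φ g}
  have hS : S.Nonempty := ⟨_, φ, ⟨⟨D, hD⟩, 0, fun g => by simp⟩, rfl⟩
  have hS_nonneg : ∀ d ∈ S, 0 ≤ d := by
    rintro _ ⟨ψ, ⟨hψ, -⟩, rfl⟩
    exact hψ.isQuasimorphismWith_defect.nonneg
  set Dmin := sInf S
  set b : ℕ → ℝ := fun n => Dmin + 1 / (n + 1)
  have hb : Tendsto b atTop (𝓝 Dmin) := by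
    simpa [b] using (tendsto_one_div_add_atTop_nhds_zero_nat (𝕜 := ℝ)).const_add Dmin
  have hseq : ∀ n, ∃ ρ : G → ℝ, (IsQuasimorphism ρ ∧ IsBoundedFun fun g => ρ g - φ g) ∧
      defect ρ < b n := fun n => by
    obtain ⟨_, ⟨ρ, hρ, rfl⟩, hlt⟩ := exists_lt_of_csInf_lt hS (lt_add_of_pos_right Dmin
      (Nat.one_div_pos_of_nat (α := ℝ) (n := n)))
    exact ⟨ρ, hρ, hlt⟩
  choose ρ hρ hρb using hseq
  have hρ_close : ∀ n g, |ρ n g - homog φ g| ≤ b n := fun n g =>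
    ((hρ n).1.abs_sub_homog_le_defect hD (hρ n).2 g).trans (hρb n).le
  have hρ_bdd : ∀ g, IsBoundedFun fun n => ρ n g := fun g =>
    IsBoundedFun.of_abs_sub_le (B := Dmin + 1) fun n => (hρ_close n g).trans
      (add_le_add le_rfl (div_le_one_of_le₀ (by simp) (by positivity)))
  set L : G → ℝ := fun g => ultraLim fun n => ρ n g
  have hL : IsQuasimorphismWith Dmin L := fun g h => by
    rw [← ultraLim_add (hρ_bdd g) (hρ_bdd h), ← ultraLim_sub ((hρ_bdd g).add (hρ_bdd h))
      (hρ_bdd (g * h))]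
    exact abs_ultraLim_le_of_tendsto (((hρ_bdd g).add (hρ_bdd h)).sub (hρ_bdd (g * h)))
      (fun n => ((hρ n).1.isQuasimorphismWith_defect g h).trans (hρb n).le) hb
  have hL_close : ∀ g, |L g - homog φ g| ≤ Dmin := fun g => by
    rw [← ultraLim_eq_of_tendsto (tendsto_const_nhds (x := homog φ g)),
      ← ultraLim_sub (hρ_bdd g) (isBoundedFun_const _)]
    exact abs_ultraLim_le_of_tendsto ((hρ_bdd g).sub (isBoundedFun_const _)) (hρ_close · g) hb
  refine ⟨L, ⟨Dmin, hL⟩, ⟨Dmin + D, fun g => ?_⟩, fun ψ hψ hψφ => ?_⟩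
  · linarith [abs_sub_le (L g) (homog φ g) (φ g), hL_close g, abs_sub_comm (φ g) (homog φ g),
      IsQuasimorphismWith.abs_sub_homog_le hD g]
  · exact hL.defect_le.trans (csInf_le ⟨0, hS_nonneg⟩ ⟨ψ, ⟨hψ, hψφ⟩, rfl⟩)

end DefectMinimizer

section Adapted

variable {G : Type*} [Group G] [DecidableEq G] {H : Subgroup G} {F : ℕ → Finset G}
  {φ ρ : G → ℝ} {D : ℝ}

lemma IsSymmetricFolnerSeq.exists_odd_quasimorphism_equivariant
    (hF : IsSymmetricFolnerSeq H F) (hφ : IsQuasimorphismWith D φ) (hρ : IsQuasimorphism ρ)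
    (hρφ : IsBoundedFun fun g => ρ g - φ g) :
    ∃ φH : G → ℝ, IsQuasimorphismWith (defect ρ) φH ∧ (∀ g, φH g⁻¹ = -φH g) ∧
      IsBoundedFun (fun g => φH g - φ g) ∧ (∀ h ∈ H, φH h = homog φ h) ∧
      ∀ g, ∀ h ∈ H, φH (g * h) = φH g + φH h ∧ φH (h * g) = φH g + φH h := by
  have hφbar := hφ.homog_isQuasimorphismWith
  have hφbar_H : ∀ a ∈ H, ∀ b ∈ H, homog φ (a * b) = homog φ a + homog φ b :=
    fun a ha b hb => hφbar.map_mul_of_mem hF hφ.homog_pow ha hb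
  have hρ_close := hρ.abs_sub_homog_le_defect hφ hρφ
  have hφH_mul := oddPart_mul_of_mem hφ.homog_inv fun g h hh =>
    ⟨biMean_mul_right hF hφbar hρ_close hφbar_H g hh,
      biMean_mul_left hF hφbar hρ_close hφbar_H g hh⟩
  have hφH_H : ∀ h ∈ H, oddPart (biMean F (homog φ) ρ) h = homog φ h := fun h hh => by
    simpa [oddPart_one] using (hφH_mul 1 hh).1
  refine ⟨_, (biMean_isQuasimorphismWith hF hφbar hρ_close hφ.homog_inv
    hρ.isQuasimorphismWith_defect).oddPart, oddPart_inv _, ?_, hφH_H, fun g h hh => ?_⟩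
  · refine ⟨defect ρ + 2 * (4 * D) + D, fun g => ?_⟩
    have h1 := abs_oddPart_sub_le hφ.homog_inv (abs_biMean_sub_le hF hφbar hρ_close) g
    linarith [abs_sub_le (oddPart (biMean F (homog φ) ρ) g) (homog φ g) (φ g),
      abs_sub_comm (φ g) (homog φ g), hφ.abs_sub_homog_le g]
  · rw [hφH_H h hh]
    exact hφH_mul g hh

end Adapted

theorem exists_quasimorphism_adapted_to_amenable_subgroup_general
    {G : Type*} [Group G] [DecidableEq G]
    (H : Subgroup G) (F : ℕ → Finset G) (hF : IsSymmetricFolnerSeq H F)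
    (φ : G → ℝ) (hφ : IsQuasimorphism φ) :
    ∃ φH : G → ℝ, IsQuasimorphism φH ∧
      (∀ g : G, φH g⁻¹ = -φH g) ∧
      (∀ g : G, |φH g - φ g| ≤ 3 * defect φ) ∧
      (∀ ψ : G → ℝ, IsQuasimorphism ψ → (∃ C : ℝ, ∀ g : G, |ψ g - φ g| ≤ C) →
        defect φH ≤ defect ψ) ∧
      (∀ (g : G), ∀ h ∈ H, φH (g * h) = φH g + φH h ∧ φH (h * g) = φH g + φH h) ∧
      (∀ h ∈ H, Tendsto (fun n : ℕ => φ (h ^ n) / (n : ℝ)) atTop (𝓝 (φH h))) := by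
  have hD := hφ.isQuasimorphismWith_defect
  obtain ⟨ρ, hρ, hρφ, hρ_min⟩ := hφ.exists_defect_minimizing
  obtain ⟨φH, hφH, hφH_inv, hφHφ, hφH_H, hφH_mul⟩ :=
    hF.exists_odd_quasimorphism_equivariant hD hρ hρφ
  refine ⟨φH, ⟨_, hφH⟩, hφH_inv, fun g => ?_,
    fun ψ hψ hψφ => hφH.defect_le.trans (hρ_min ψ hψ hψφ), hφH_mul, fun h hh => ?_⟩
  · have hρ_le : defect ρ ≤ defect φ := hρ_min φ hφ ⟨0, fun g => by simp⟩
    linarith [abs_sub_le (φH g) (homog φ g) (φ g), abs_sub_comm (φ g) (homog φ g),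
      hD.abs_sub_homog_le g, IsQuasimorphism.abs_sub_homog_le_defect ⟨_, hφH⟩ hD hφHφ g,
      hφH.defect_le, hD.nonneg]
  · rw [hφH_H h hh]
    exact hD.tendsto_homog h

/-- **Quasimorphisms and amenable subgroups** (Theorem `quasimorphisms and amenable
subgroups`).  Let `G` be a finitely generated group, `H ≤ G` a subgroup admitting a
symmetric Følner sequence, and `φ : G → ℝ` a quasimorphism.  Then there is a symmetric
quasimorphism `φ_H`, equivalent to `φ` with `‖φ_H - φ‖ ≤ 3 D(φ)`, which is defect
minimizing among all quasimorphisms equivalent to it, satisfies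
`φ_H (g h) = φ_H g + φ_H h = φ_H (h g)` for all `g ∈ G`, `h ∈ H`; in particular `φ_H`
restricts on `H` to a homomorphism equal to the homogenization `h ↦ lim φ(hⁿ)/n`. -/
theorem exists_quasimorphism_adapted_to_amenable_subgroup
    {G : Type*} [Group G] [DecidableEq G] [Group.FG G]
    (H : Subgroup G) (F : ℕ → Finset G) (hF : IsSymmetricFolnerSeq H F)
    (φ : G → ℝ) (hφ : IsQuasimorphism φ) :
    ∃ φH : G → ℝ, IsQuasimorphism φH ∧
      (∀ g : G, φH g⁻¹ = -φH g) ∧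
      (∀ g : G, |φH g - φ g| ≤ 3 * defect φ) ∧
      (∀ ψ : G → ℝ, IsQuasimorphism ψ → (∃ C : ℝ, ∀ g : G, |ψ g - φ g| ≤ C) →
        defect φH ≤ defect ψ) ∧
      (∀ (g : G), ∀ h ∈ H, φH (g * h) = φH g + φH h ∧ φH (h * g) = φH g + φH h) ∧
      (∀ h ∈ H, Tendsto (fun n : ℕ => φ (h ^ n) / (n : ℝ)) atTop (𝓝 (φH h))) :=
  exists_quasimorphism_adapted_to_amenable_subgroup_general H F hF φ hφ
end

section
/- Let b be an alternating word of even length M ≥ 2 in the free group F(a,b). Then for every w ∈ F(a,b) the limit rot̄_b(w) = lim_{n→∞} ρ̄_b(wⁿ)(0)/n exists, and rot̄_b : F(a,b) → ℝ is a homogeneous quasimorphism of defect at most M. Moreover, there is a homomorphism ρ_b from F(a,b) to the group Homeo⁺_{Mℤ}(ℝ) of orientation-preserving homeomorphisms of ℝ commuting with translation by M, such that rot̄_b(w) = rot(ρ_b(w)) for every w ∈ F(a,b). -/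
open Filter Topology

/-- A (reduced) word in the free group `F(a,b)`, given as a list of letters
`(generator, sign)`, is *alternating* if its letters alternate between the two
generators. -/
def AlternatingWord (L : List (Bool × Bool)) : Prop :=
  L.Chain' fun p q => p.1 ≠ q.1

/-- The formal inverse of a letter. -/
def invLetter (p : Bool × Bool) : Bool × Bool := (p.1, !p.2)

/-- Given the list `L = [x₀, …, x_{M-1}]` of letters of the base word `b`, the map
`ρ̄_b(y) : ℤ → ℤ` associated to a letter `y`:
`i ↦ i + 1` if `y = x_{i mod M}`, `i ↦ i - 1` if `y = x_{(i-1) mod M}⁻¹`, and `i ↦ i`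
otherwise. -/
def rhoStep (L : List (Bool × Bool)) (y : Bool × Bool) (i : ℤ) : ℤ :=
  if y = L.getD (i % (L.length : ℤ)).toNat default then i + 1
  else if y = invLetter (L.getD ((i - 1) % (L.length : ℤ)).toNat default) then i - 1
  else i

/-- The map `ρ̄_b(w) : ℤ → ℤ` for `w` in the free group on two generators, defined as the
composite `ρ̄_b(y₁) ∘ ⋯ ∘ ρ̄_b(y_m)` over the reduced word `y₁ ⋯ y_m` of `w`. -/
def rhoWord (L : List (Bool × Bool)) (w : FreeGroup Bool) : ℤ → ℤ :=
  (w.toWord.map (rhoStep L)).foldr (· ∘ ·) id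

/-- The group of orientation-preserving homeomorphisms of `ℝ` commuting with translation by
`M`, realized as the subgroup of `Equiv.Perm ℝ` consisting of strictly increasing bijections
`f` with `f (x + M) = f x + M`.  (A bijection of `ℝ` is an orientation-preserving
homeomorphism iff it is strictly increasing.) -/
def HomeoPlusMZ (M : ℕ) : Subgroup (Equiv.Perm ℝ) where
  carrier := {f | StrictMono f ∧ ∀ x : ℝ, f (x + M) = f x + M}
  one_mem' := ⟨fun _ _ h => h, fun _ => rfl⟩
  mul_mem' := by
    rintro f g ⟨hf1, hf2⟩ ⟨hg1, hg2⟩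
    refine ⟨fun a b hab => hf1 (hg1 hab), fun x => ?_⟩
    show f (g (x + M)) = f (g x) + M
    rw [hg2, hf2]
  inv_mem' := by
    rintro f ⟨hf1, hf2⟩
    refine ⟨fun a b hab => ?_, fun x => ?_⟩
    · have h : f (f⁻¹ a) < f (f⁻¹ b) := by
        rwa [Equiv.Perm.coe_inv, Equiv.apply_symm_apply, Equiv.apply_symm_apply]
      exact (hf1.lt_iff_lt).mp h
    · apply hf1.injective
      rw [Equiv.Perm.coe_inv, Equiv.apply_symm_apply, hf2, Equiv.apply_symm_apply]

/-! Each letter `y` acts on `ℝ` by a piecewise linear homeomorphism which, on every block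
`[i - 1/2, i + 3/2)` where `x_i` involves the generator of `y`, moves `i` to `i + 1` if `x_i = y`
and `i + 1` to `i` if `x_i = y⁻¹`; these maps commute with translation by `M` and generate
`ρ_b`. Along a reduced word the real orbit of `0` stays within `1/2` of the integer orbit
`ρ̄_b(w)(0)`, so `rot̄_b = rot ∘ ρ_b`. Conjugating by `t ↦ M t` turns `Homeo⁺_{Mℤ}(ℝ)` into lifts
of degree-one circle maps, whose translation number is a homogeneous quasimorphism of
defect `1`. -/

open Set

local notation "τ" => CircleDeg1Lift.translationNumber

namespace CircleDeg1Lift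

theorem translationNumber_units_mul_le (u v : CircleDeg1Liftˣ) :
    τ ↑(u * v) ≤ τ u + τ v + 1 := by
  set c : ℤ := ⌈τ ↑(u * v)⌉ - 1
  have hc : (c : ℝ) < τ ↑(u * v) := by
    simp only [c, Int.cast_sub, Int.cast_one]
    linarith [Int.ceil_lt_add_one (τ ↑(u * v))]
  -- `u * v` moves every point by more than `c`, so `u` lies above `translate c * v⁻¹`
  have hle : translate (Multiplicative.ofAdd (c : ℝ)) * ↑v⁻¹ ≤ (u : CircleDeg1Lift) := by
    intro t
    have := (↑(u * v) : CircleDeg1Lift).lt_map_of_int_lt_translationNumber hc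
      ((↑v⁻¹ : CircleDeg1Lift) t)
    rw [Units.val_mul, mul_apply, units_apply_inv_apply] at this
    rw [mul_apply, translate_apply]
    linarith
  have hcomm : Commute (↑(translate (Multiplicative.ofAdd (c : ℝ))) : CircleDeg1Lift) ↑v⁻¹ :=
    CircleDeg1Lift.ext fun t => by
      rw [mul_apply, mul_apply, translate_apply, translate_apply, map_int_add]
  have hτ := translationNumber_mono hle
  rw [translationNumber_mul_of_commute hcomm, translationNumber_translate,
    translationNumber_units_inv] at hτ
  have : τ ↑(u * v) ≤ c + 1 := by
    simp only [c, Int.cast_sub, Int.cast_one]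
    linarith [Int.le_ceil (τ ↑(u * v))]
  linarith

theorem abs_translationNumber_add_sub_units_mul_le_one (u v : CircleDeg1Liftˣ) :
    |τ u + τ v - τ ↑(u * v)| ≤ 1 := by
  have h₁ := translationNumber_units_mul_le u v
  have h₂ := translationNumber_units_mul_le (u * v) v⁻¹
  rw [mul_inv_cancel_right, translationNumber_units_inv] at h₂
  rw [abs_le]
  constructor <;> linarith

end CircleDeg1Lift

namespace HomeoPlusMZ

variable {M : ℕ} [NeZero M]

noncomputable def toCircleDeg1Lift : HomeoPlusMZ M →* CircleDeg1Lift where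
  toFun f :=
    { toFun := fun t => (f : Equiv.Perm ℝ) (M * t) / M
      monotone' := fun s t hst => div_le_div_of_nonneg_right
        (f.2.1.monotone (mul_le_mul_of_nonneg_left hst (Nat.cast_nonneg M))) (Nat.cast_nonneg M)
      map_add_one' := fun t => by
        show (f : Equiv.Perm ℝ) (M * (t + 1)) / M = (f : Equiv.Perm ℝ) (M * t) / M + 1
        rw [mul_add_one, f.2.2, add_div, div_self (NeZero.ne _)] }
  map_one' := CircleDeg1Lift.ext fun t => by simp [NeZero.ne]
  map_mul' f g := CircleDeg1Lift.ext fun t => by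
    change _ = (f : Equiv.Perm ℝ) (M * ((g : Equiv.Perm ℝ) (M * t) / M)) / M
    rw [mul_div_cancel₀ _ (NeZero.ne _)]
    rfl

theorem toCircleDeg1Lift_apply (f : HomeoPlusMZ M) (t : ℝ) :
    toCircleDeg1Lift f t = (f : Equiv.Perm ℝ) (M * t) / M := rfl

noncomputable def rotationNumber (f : HomeoPlusMZ M) : ℝ :=
  M * τ (toCircleDeg1Lift f)

theorem tendsto_rotationNumber (f : HomeoPlusMZ M) :
    Tendsto (fun n : ℕ => ((f ^ n : HomeoPlusMZ M) : Equiv.Perm ℝ) 0 / n) atTop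
      (𝓝 (rotationNumber f)) := by
  refine ((toCircleDeg1Lift f).tendsto_translation_number₀.const_mul (M : ℝ)).congr fun n => ?_
  rw [← map_pow, toCircleDeg1Lift_apply, mul_zero]
  field_simp [NeZero.ne (M : ℝ)]

theorem rotationNumber_zpow (f : HomeoPlusMZ M) (k : ℤ) :
    rotationNumber (f ^ k) = k * rotationNumber f := by
  have := CircleDeg1Lift.translationNumber_zpow (toCircleDeg1Lift.toHomUnits f) k
  rw [← map_zpow] at this
  simp only [rotationNumber, MonoidHom.coe_toHomUnits] at this ⊢
  rw [this]
  ring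

theorem abs_rotationNumber_add_sub_mul_le (f g : HomeoPlusMZ M) :
    |rotationNumber f + rotationNumber g - rotationNumber (f * g)| ≤ M := by
  have := CircleDeg1Lift.abs_translationNumber_add_sub_units_mul_le_one
    (toCircleDeg1Lift.toHomUnits f) (toCircleDeg1Lift.toHomUnits g)
  rw [← map_mul] at this
  simp only [rotationNumber, MonoidHom.coe_toHomUnits] at this ⊢
  rw [← mul_add, ← mul_sub, abs_mul, Nat.abs_cast]
  exact mul_le_of_le_one_right (Nat.cast_nonneg M) this

end HomeoPlusMZ

theorem tendsto_div_natCast_of_abs_sub_le {a b : ℕ → ℝ} {C r : ℝ} (h : ∀ n, |a n - b n| ≤ C)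
    (hb : Tendsto (fun n : ℕ => b n / n) atTop (𝓝 r)) :
    Tendsto (fun n : ℕ => a n / n) atTop (𝓝 r) := by
  have hdiff : Tendsto (fun n : ℕ => (a n - b n) / n) atTop (𝓝 0) := by
    refine squeeze_zero_norm (fun n => ?_) (tendsto_const_div_atTop_nhds_zero_nat C)
    rw [Real.norm_eq_abs, abs_div, Nat.abs_cast]
    exact div_le_div_of_nonneg_right (h n) (Nat.cast_nonneg n)
  simpa [sub_div] using hdiff.add hb

/-- A homeomorphism of the block `[-1/2, 3/2]` moving `0` to `1`. -/
noncomputable def pushUp : ℝ ≃o ℝ :=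
  StrictMono.orderIsoOfRightInverse (fun u => if u ≤ 0 then 3 * u + 1 else u / 3 + 1)
    (fun u v huv => by dsimp only; split_ifs <;> linarith)
    (fun u => if u ≤ 1 then (u - 1) / 3 else 3 * u - 3)
    (fun u => by dsimp only; split_ifs <;> linarith)

theorem pushUp_of_nonpos {u : ℝ} (hu : u ≤ 0) : pushUp u = 3 * u + 1 := if_pos hu

theorem pushUp_of_nonneg {u : ℝ} (hu : 0 ≤ u) : pushUp u = u / 3 + 1 := by
  rcases hu.eq_or_lt with rfl | hu
  · norm_num [pushUp_of_nonpos]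
  · exact if_neg hu.not_ge

theorem pushUp_symm_of_le_one {u : ℝ} (hu : u ≤ 1) : pushUp.symm u = (u - 1) / 3 := by
  rw [OrderIso.symm_apply_eq, pushUp_of_nonpos (by linarith)]
  ring

theorem pushUp_mem_Ico_iff {u : ℝ} :
    pushUp u ∈ Ico (-1 / 2 : ℝ) (3 / 2) ↔ u ∈ Ico (-1 / 2 : ℝ) (3 / 2) := by
  have h₁ : pushUp (-1 / 2) = -1 / 2 := by rw [pushUp_of_nonpos (by norm_num)]; norm_num
  have h₂ : pushUp (3 / 2) = 3 / 2 := by rw [pushUp_of_nonneg (by norm_num)]; norm_num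
  conv_lhs => rw [← h₁, ← h₂]
  simp only [mem_Ico, pushUp.le_iff_le, pushUp.lt_iff_lt]

theorem pushUp_symm_mem_Ico_iff {u : ℝ} :
    pushUp.symm u ∈ Ico (-1 / 2 : ℝ) (3 / 2) ↔ u ∈ Ico (-1 / 2 : ℝ) (3 / 2) := by
  rw [← pushUp_mem_Ico_iff, OrderIso.apply_symm_apply]

theorem invLetter_invLetter (p : Bool × Bool) : invLetter (invLetter p) = p := by
  simp [invLetter]

theorem invLetter_ne (p : Bool × Bool) : invLetter p ≠ p := by
  simp [invLetter, Prod.ext_iff]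

theorem eq_or_eq_invLetter_of_fst_eq {p q : Bool × Bool} (h : p.1 = q.1) :
    p = q ∨ p = invLetter q := by
  obtain ⟨a, s⟩ := p
  obtain ⟨b, r⟩ := q
  cases s <;> cases r <;> simp_all [invLetter]

def IsAlternating (x : ℤ → Bool × Bool) : Prop :=
  ∀ i, (x (i + 1)).1 = !(x i).1

/-- `i ↦ x_{i mod M}` for `L = x₀ ⋯ x_{M-1}`. -/
def periodicLetter (L : List (Bool × Bool)) (i : ℤ) : Bool × Bool :=
  L.getD (i % (L.length : ℤ)).toNat default

theorem AlternatingWord.fst_getElem {L : List (Bool × Bool)} (halt : AlternatingWord L) :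
    ∀ (j : ℕ) (hj : j < L.length),
      L[j].1 = if Even j then (L[0]'(by omega)).1 else !(L[0]'(by omega)).1
  | 0, _ => by simp
  | j + 1, hj => by
    have hadj : L[j].1 ≠ L[j + 1].1 := List.isChain_iff_getElem.mp halt j hj
    rw [Bool.eq_not_iff.mpr hadj.symm, halt.fst_getElem j (by omega)]
    simp only [Nat.even_add_one]
    split_ifs <;> simp

theorem periodicLetter_add_length (L : List (Bool × Bool)) (i : ℤ) :
    periodicLetter L (i + L.length) = periodicLetter L i := by
  simp [periodicLetter]

theorem isAlternating_periodicLetter {L : List (Bool × Bool)} (halt : AlternatingWord L)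
    (heven : Even L.length) (hne : 0 < L.length) : IsAlternating (periodicLetter L) := by
  have hfst : ∀ i : ℤ, (periodicLetter L i).1 =
      if Even i then (L[0]'hne).1 else !(L[0]'hne).1 := by
    intro i
    have hnn : 0 ≤ i % L.length := Int.emod_nonneg i (by omega)
    have hlt : i % L.length < L.length := Int.emod_lt_of_pos i (by omega)
    have hpar : i % L.length % 2 = i % 2 :=
      Int.emod_emod_of_dvd i (by exact_mod_cast even_iff_two_dvd.mp heven)
    have hj : (i % L.length).toNat < L.length := by omega
    rw [periodicLetter, List.getD_eq_getElem _ _ hj, halt.fst_getElem _ hj]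
    have : Even (i % L.length).toNat ↔ Even i := by
      rw [Nat.even_iff, Int.even_iff]; omega
    simp only [this]
  intro i
  simp only [hfst, Int.even_add_one]
  split_ifs <;> simp

namespace IsAlternating

variable {x : ℤ → Bool × Bool}

theorem fst_ne_sub_one (hx : IsAlternating x) (k : ℤ) : (x k).1 ≠ (x (k - 1)).1 := by
  rw [← sub_add_cancel k 1, hx (k - 1), sub_add_cancel]
  simp

theorem ne_add_one_of_fst_eq (hx : IsAlternating x) {i j : ℤ} (h : (x i).1 = (x j).1) :
    j ≠ i + 1 := by
  rintro rfl
  simp [hx i] at h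

end IsAlternating

/-- The blocks `[i - 1/2, i + 3/2)` with `(x i).1 = g` tile `ℝ`; this is the index of the one
containing `t`. -/
noncomputable def blockIdx (x : ℤ → Bool × Bool) (g : Bool) (t : ℝ) : ℤ :=
  if (x ⌊t + 1 / 2⌋).1 = g then ⌊t + 1 / 2⌋ else ⌊t + 1 / 2⌋ - 1

/-- On the block of index `i`, the letter `y` acts by `pushUp` (moving `i` to `i + 1`) if
`x i = y`, and by its inverse (moving `i + 1` to `i`) if `x i = y⁻¹`. -/
noncomputable def blockMap (x : ℤ → Bool × Bool) (y : Bool × Bool) (i : ℤ) (t : ℝ) : ℝ :=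
  i + if x i = y then pushUp (t - i) else pushUp.symm (t - i)

noncomputable def realStep (x : ℤ → Bool × Bool) (y : Bool × Bool) (t : ℝ) : ℝ :=
  blockMap x y (blockIdx x y.1 t) t

section RealStep

variable {x : ℤ → Bool × Bool}

theorem sub_blockIdx_mem_Ico (g : Bool) (t : ℝ) :
    t - blockIdx x g t ∈ Ico (-1 / 2 : ℝ) (3 / 2) := by
  have h₁ := Int.floor_le (t + 1 / 2)
  have h₂ := Int.lt_floor_add_one (t + 1 / 2)
  unfold blockIdx
  split_ifs <;> constructor <;> push_cast <;> linarith

theorem sub_blockMap_mem_Ico_iff {y : Bool × Bool} {i : ℤ} {t : ℝ} :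
    blockMap x y i t - i ∈ Ico (-1 / 2 : ℝ) (3 / 2) ↔ t - i ∈ Ico (-1 / 2 : ℝ) (3 / 2) := by
  unfold blockMap
  rw [add_sub_cancel_left]
  split_ifs
  exacts [pushUp_mem_Ico_iff, pushUp_symm_mem_Ico_iff]

theorem blockIdx_add_natCast {M : ℕ} (hper : ∀ i, x (i + M) = x i) (g : Bool) (t : ℝ) :
    blockIdx x g (t + M) = blockIdx x g t + M := by
  have hfloor : ⌊t + M + 1 / 2⌋ = ⌊t + 1 / 2⌋ + M := by
    rw [add_right_comm, Int.floor_add_natCast]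
  unfold blockIdx
  rw [hfloor, hper]
  split_ifs <;> ring

theorem realStep_add_natCast {M : ℕ} (hper : ∀ i, x (i + M) = x i) (y : Bool × Bool) (t : ℝ) :
    realStep x y (t + M) = realStep x y t + M := by
  have hshift : t + M - ((blockIdx x y.1 t + M : ℤ) : ℝ) = t - blockIdx x y.1 t := by
    push_cast
    ring
  rw [realStep, realStep, blockMap, blockMap, blockIdx_add_natCast hper, hper, hshift]
  push_cast
  ring

namespace IsAlternating

variable (hx : IsAlternating x)
include hx

theorem fst_blockIdx (g : Bool) (t : ℝ) : (x (blockIdx x g t)).1 = g := by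
  have hne := hx.fst_ne_sub_one ⌊t + 1 / 2⌋
  unfold blockIdx
  split_ifs with h
  · exact h
  · revert h hne
    cases (x ⌊t + 1 / 2⌋).1 <;> cases (x (⌊t + 1 / 2⌋ - 1)).1 <;> cases g <;> simp

theorem blockIdx_eq {g : Bool} {i : ℤ} {t : ℝ} (hg : (x i).1 = g)
    (ht : t - i ∈ Ico (-1 / 2 : ℝ) (3 / 2)) : blockIdx x g t = i := by
  obtain ⟨h₁, h₂⟩ := ht
  have hj : ⌊t + 1 / 2⌋ = i ∨ ⌊t + 1 / 2⌋ = i + 1 := by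
    have : i ≤ ⌊t + 1 / 2⌋ := Int.le_floor.mpr (by linarith)
    have : ⌊t + 1 / 2⌋ < i + 2 := Int.floor_lt.mpr (by push_cast; linarith)
    omega
  unfold blockIdx
  rcases hj with hj | hj <;> rw [hj]
  · simp [hg]
  · simp [hx i, hg]

theorem realStep_eq {y : Bool × Bool} {i : ℤ} {t : ℝ} (hg : (x i).1 = y.1)
    (ht : t - i ∈ Ico (-1 / 2 : ℝ) (3 / 2)) : realStep x y t = blockMap x y i t := by
  rw [realStep, hx.blockIdx_eq hg ht]

theorem realStep_invLetter_realStep (y : Bool × Bool) (t : ℝ) :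
    realStep x (invLetter y) (realStep x y t) = t := by
  set i := blockIdx x y.1 t
  have hg : (x i).1 = y.1 := hx.fst_blockIdx y.1 t
  have ht : realStep x y t - i ∈ Ico (-1 / 2 : ℝ) (3 / 2) :=
    sub_blockMap_mem_Ico_iff.mpr (sub_blockIdx_mem_Ico y.1 t)
  rw [hx.realStep_eq (y := invLetter y) hg ht]
  change blockMap x (invLetter y) i (blockMap x y i t) = t
  rcases eq_or_eq_invLetter_of_fst_eq hg with h | h
  · simp [blockMap, h, (invLetter_ne y).symm]
  · simp [blockMap, h, invLetter_ne y]

theorem strictMono_realStep (y : Bool × Bool) : StrictMono (realStep x y) := by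
  intro t t' hlt
  set i := blockIdx x y.1 t
  set i' := blockIdx x y.1 t'
  have hmem := sub_blockIdx_mem_Ico (x := x) y.1 t
  have hmem' := sub_blockIdx_mem_Ico (x := x) y.1 t'
  have hgen : (x i).1 = (x i').1 := by rw [hx.fst_blockIdx, hx.fst_blockIdx]
  have hfar : i' ≠ i + 1 ∧ i ≠ i' + 1 :=
    ⟨hx.ne_add_one_of_fst_eq hgen, hx.ne_add_one_of_fst_eq hgen.symm⟩
  rcases lt_trichotomy i i' with hii | hii | hii
  · have hout := sub_blockMap_mem_Ico_iff (x := x) (y := y) |>.mpr hmem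
    have hout' := sub_blockMap_mem_Ico_iff (x := x) (y := y) |>.mpr hmem'
    have : (i : ℝ) + 2 ≤ i' := by exact_mod_cast (by omega : i + 2 ≤ i')
    change blockMap x y i t < blockMap x y i' t'
    linarith [hout.2, hout'.1]
  · change blockMap x y i t < blockMap x y i' t'
    rw [← hii]
    unfold blockMap
    split_ifs
    · simpa using pushUp.strictMono (sub_lt_sub_right hlt (i : ℝ))
    · simpa using pushUp.symm.strictMono (sub_lt_sub_right hlt (i : ℝ))
  · have : (i' : ℝ) + 2 ≤ i := by exact_mod_cast (by omega : i' + 2 ≤ i)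
    linarith [hmem.1, hmem'.2]

end IsAlternating

end RealStep

def intStep (x : ℤ → Bool × Bool) (y : Bool × Bool) (i : ℤ) : ℤ :=
  if y = x i then i + 1 else if y = invLetter (x (i - 1)) then i - 1 else i

/-- `k` is the position of the integer orbit and `t` that of the real orbit, after a word whose
last applied letter is `y`. -/
def Tracks (x : ℤ → Bool × Bool) (y : Bool × Bool) (k : ℤ) (t : ℝ) : Prop :=
  |t - k| < 1 / 2 ∧ (t < k → x k = invLetter y) ∧ (k < t → x (k - 1) = y)

theorem intStep_self (x : ℤ → Bool × Bool) (k : ℤ) : intStep x (x k) k = k + 1 := if_pos rfl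

theorem tracks_intCast (x : ℤ → Bool × Bool) (y : Bool × Bool) (k : ℤ) : Tracks x y k k := by
  simp [Tracks]

namespace IsAlternating

variable {x : ℤ → Bool × Bool} (hx : IsAlternating x)
include hx

theorem letter_cases (k : ℤ) (z : Bool × Bool) :
    z = x k ∨ z = invLetter (x k) ∨ z = x (k - 1) ∨ z = invLetter (x (k - 1)) := by
  by_cases h : z.1 = (x k).1
  · rcases eq_or_eq_invLetter_of_fst_eq h with h | h <;> simp [h]
  · have h' : z.1 = (x (k - 1)).1 := by
      have := hx.fst_ne_sub_one k
      revert h this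
      cases z.1 <;> cases (x k).1 <;> cases (x (k - 1)).1 <;> simp
    rcases eq_or_eq_invLetter_of_fst_eq h' with h | h <;> simp [h]

theorem ne_of_fst_eq_sub_one (k : ℤ) {p q : Bool × Bool} (hp : p.1 = (x k).1)
    (hq : q.1 = (x (k - 1)).1) : p ≠ q := fun h =>
  hx.fst_ne_sub_one k (by rw [← hp, ← hq, h])

theorem intStep_invLetter (k : ℤ) : intStep x (invLetter (x k)) k = k := by
  rw [intStep, if_neg (invLetter_ne _),
    if_neg (hx.ne_of_fst_eq_sub_one k (p := invLetter _) (q := invLetter _) rfl rfl)]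

theorem intStep_sub_one (k : ℤ) : intStep x (x (k - 1)) k = k := by
  rw [intStep, if_neg (hx.ne_of_fst_eq_sub_one k rfl rfl).symm, if_neg (invLetter_ne _).symm]

theorem intStep_invLetter_sub_one (k : ℤ) : intStep x (invLetter (x (k - 1))) k = k - 1 := by
  rw [intStep, if_neg (hx.ne_of_fst_eq_sub_one k (p := x k) (q := invLetter _) rfl rfl).symm,
    if_pos rfl]

theorem tracks_step {y z : Bool × Bool} {k : ℤ} {t : ℝ} (h : Tracks x y k t)
    (hz : z ≠ invLetter y) : Tracks x z (intStep x z k) (realStep x z t) := by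
  obtain ⟨habs, hlt, hgt⟩ := h
  rw [abs_lt] at habs
  have hk : t - k ∈ Ico (-1 / 2 : ℝ) (3 / 2) := ⟨by linarith, by linarith⟩
  have hk₁ : t - ↑(k - 1) ∈ Ico (-1 / 2 : ℝ) (3 / 2) := by
    push_cast
    exact ⟨by linarith, by linarith⟩
  rcases hx.letter_cases k z with rfl | rfl | rfl | rfl
  · -- `k` moves up to `k + 1`; this needs `t ≥ k`, which is where reducedness enters
    have ht : (k : ℝ) ≤ t := le_of_not_gt fun h => hz (hlt h)
    rw [intStep_self, hx.realStep_eq rfl hk, blockMap, if_pos rfl,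
      pushUp_of_nonneg (by linarith)]
    refine ⟨?_, fun h => ?_, fun _ => by simp⟩
    · rw [abs_lt]; push_cast; constructor <;> linarith
    · push_cast at h; linarith
  · rw [hx.intStep_invLetter, hx.realStep_eq (y := invLetter _) rfl hk, blockMap,
      if_neg (invLetter_ne _).symm, pushUp_symm_of_le_one (by linarith)]
    refine ⟨?_, fun _ => (invLetter_invLetter _).symm, fun h => ?_⟩
    · rw [abs_lt]; constructor <;> linarith
    · linarith
  · rw [hx.intStep_sub_one, hx.realStep_eq rfl hk₁, blockMap, if_pos rfl,
      pushUp_of_nonneg (by push_cast; linarith)]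
    refine ⟨?_, fun h => ?_, fun _ => rfl⟩
    · rw [abs_lt]; push_cast; constructor <;> linarith
    · push_cast at h; linarith
  · -- `k` moves down to `k - 1`; this needs `t ≤ k`
    have ht : t ≤ k := le_of_not_gt fun h => hz (by rw [hgt h])
    rw [hx.intStep_invLetter_sub_one, hx.realStep_eq (y := invLetter _) rfl hk₁, blockMap,
      if_neg (invLetter_ne _).symm, pushUp_symm_of_le_one (by push_cast; linarith)]
    refine ⟨?_, fun _ => (invLetter_invLetter _).symm, fun h => ?_⟩
    · rw [abs_lt]; push_cast; constructor <;> linarith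
    · push_cast at h; linarith

end IsAlternating

def intWord (x : ℤ → Bool × Bool) (W : List (Bool × Bool)) : ℤ → ℤ :=
  (W.map (intStep x)).foldr (· ∘ ·) id

noncomputable def realWord (x : ℤ → Bool × Bool) (W : List (Bool × Bool)) : ℝ → ℝ :=
  (W.map (realStep x)).foldr (· ∘ ·) id

theorem rhoWord_eq_intWord (L : List (Bool × Bool)) (w : FreeGroup Bool) :
    rhoWord L w = intWord (periodicLetter L) w.toWord := rfl

namespace IsAlternating

variable {x : ℤ → Bool × Bool} (hx : IsAlternating x)
include hx

theorem tracks_realWord (k : ℤ) : ∀ (y : Bool × Bool) (W : List (Bool × Bool)),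
    FreeGroup.IsReduced (y :: W) → Tracks x y (intWord x (y :: W) k) (realWord x (y :: W) k)
  | y, [], _ => hx.tracks_step (tracks_intCast x y k) (invLetter_ne y).symm
  | y, y' :: W, hW => by
    rw [FreeGroup.isReduced_cons_cons] at hW
    refine hx.tracks_step (tracks_realWord k y' W hW.2) fun h => ?_
    have := hW.1 (by rw [h]; rfl)
    simp [h, invLetter] at this

theorem abs_realWord_sub_intWord_lt {W : List (Bool × Bool)} (hW : FreeGroup.IsReduced W)
    (k : ℤ) : |realWord x W k - intWord x W k| < 1 / 2 := by
  cases W with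
  | nil => simp [realWord, intWord]
  | cons y W => exact (hx.tracks_realWord k y W hW).1

noncomputable def letterPerm (g : Bool) : Equiv.Perm ℝ where
  toFun := realStep x (g, true)
  invFun := realStep x (g, false)
  left_inv := hx.realStep_invLetter_realStep (g, true)
  right_inv := hx.realStep_invLetter_realStep (g, false)

noncomputable def letterHomeo {M : ℕ} (hper : ∀ i, x (i + M) = x i) (g : Bool) :
    HomeoPlusMZ M :=
  ⟨hx.letterPerm g, hx.strictMono_realStep _, realStep_add_natCast hper _⟩

variable {M : ℕ} (hper : ∀ i, x (i + M) = x i)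

theorem prod_letterHomeo_apply (W : List (Bool × Bool)) (t : ℝ) :
    (((W.map fun y => cond y.2 (hx.letterHomeo hper y.1) (hx.letterHomeo hper y.1)⁻¹).prod :
      HomeoPlusMZ M) : Equiv.Perm ℝ) t = realWord x W t := by
  induction W generalizing t with
  | nil => rfl
  | cons y W ih =>
    rw [List.map_cons, List.prod_cons, Subgroup.coe_mul, Equiv.Perm.mul_apply, ih]
    obtain ⟨g, _ | _⟩ := y <;> rfl

theorem lift_letterHomeo_apply (w : FreeGroup Bool) (t : ℝ) :
    ((FreeGroup.lift (hx.letterHomeo hper) w : HomeoPlusMZ M) : Equiv.Perm ℝ) t =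
      realWord x w.toWord t := by
  conv_lhs => rw [← FreeGroup.mk_toWord (x := w), FreeGroup.lift_mk]
  exact hx.prod_letterHomeo_apply hper _ t

end IsAlternating

/-- **Circle quasimorphisms** (Theorem `ab circle action`).  Let `b` be an alternating word
of even length `M ≥ 2` in the free group `F(a,b)`.  Then for every `w ∈ F(a,b)` the limit
`rot̄_b(w) = lim_n ρ̄_b(wⁿ)(0)/n` exists, `rot̄_b` is a homogeneous quasimorphism of defect
at most `M`, and there is a homomorphism `ρ_b : F(a,b) → Homeo⁺_{Mℤ}(ℝ)` whose pulled-back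
rotation number agrees with `rot̄_b`. -/
theorem circle_quasimorphism_exists (b : FreeGroup Bool) (M : ℕ)
    (hlen : b.toWord.length = M) (halt : AlternatingWord b.toWord)
    (heven : Even M) (hM : 2 ≤ M) :
    ∃ rotb : FreeGroup Bool → ℝ,
      (∀ w : FreeGroup Bool,
        Tendsto (fun n : ℕ => (rhoWord b.toWord (w ^ n) 0 : ℝ) / (n : ℝ)) atTop
          (𝓝 (rotb w))) ∧
      (∀ (w : FreeGroup Bool) (k : ℤ), rotb (w ^ k) = (k : ℝ) * rotb w) ∧
      (∀ u v : FreeGroup Bool, |rotb u + rotb v - rotb (u * v)| ≤ (M : ℝ)) ∧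
      ∃ ρ : FreeGroup Bool →* HomeoPlusMZ M,
        ∀ w : FreeGroup Bool,
          Tendsto (fun n : ℕ => (((ρ w ^ n : HomeoPlusMZ M) : Equiv.Perm ℝ) (0 : ℝ)) / (n : ℝ))
            atTop (𝓝 (rotb w)) := by
  subst hlen
  have hx := isAlternating_periodicLetter halt heven (by omega)
  have : NeZero b.toWord.length := ⟨by omega⟩
  set ρ := FreeGroup.lift (hx.letterHomeo (periodicLetter_add_length b.toWord))
  refine ⟨fun w => HomeoPlusMZ.rotationNumber (ρ w), fun w => ?_,
    fun w k => by simp only [map_zpow, HomeoPlusMZ.rotationNumber_zpow],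
    fun u v => by
      simpa only [map_mul] using HomeoPlusMZ.abs_rotationNumber_add_sub_mul_le (ρ u) (ρ v),
    ρ, fun w => HomeoPlusMZ.tendsto_rotationNumber (ρ w)⟩
  refine tendsto_div_natCast_of_abs_sub_le (C := 1 / 2) (fun n => ?_)
    (HomeoPlusMZ.tendsto_rotationNumber (ρ w))
  rw [← map_pow, hx.lift_letterHomeo_apply, rhoWord_eq_intWord, abs_sub_comm]
  simpa using (hx.abs_realWord_sub_intWord_lt FreeGroup.isReduced_toWord 0).le
end

section
/- Let ‖·‖ be a degenerate norm on ℝⁿ. If the vanishing locus V^z = {v ∈ ℝⁿ : ‖v‖ = 0} is a rational subspace, then there exists a constant C > 0 such that every integer point P ∈ ℤⁿ satisfies either ‖P‖ = 0 or ‖P‖ ≥ C. -/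
open scoped ENNReal

/-- A *degenerate norm* on a real vector space `V`: a function `V → [0,∞]` vanishing at `0`,
positively homogeneous (`‖c • v‖ = |c| ‖v‖` for `c ≠ 0`) and satisfying the triangle
inequality. -/
structure IsDegenerateNorm {V : Type*} [AddCommGroup V] [Module ℝ V]
    (N : V → ℝ≥0∞) : Prop where
  map_zero : N 0 = 0
  smul : ∀ c : ℝ, c ≠ 0 → ∀ v : V, N (c • v) = ENNReal.ofReal |c| * N v
  add_le : ∀ u v : V, N (u + v) ≤ N u + N v

/-! On its domain `{v | ‖v‖ < ∞}` a degenerate norm is a seminorm on a finite-dimensional space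
with kernel `Z = V^z`, so by compactness of the unit sphere of a complement of `Z` it dominates
`c · dist(v, Z)`. A rational `Z` is spanned by integer points, hence the integer points of `Z` are
`R`-dense in `Z`. Translating an integer point `P ∉ Z` that is close to `Z` by a nearby integer
point of `Z` moves it into a fixed finite set of integer points off `Z` without changing its
distance to `Z`, so `dist(P, Z)` is bounded below by some `ε > 0`. -/

open Metric

namespace Seminorm

variable {E : Type*} [NormedAddCommGroup E] [NormedSpace ℝ E] [FiniteDimensional ℝ E]

theorem continuous_of_finiteDimensional (p : Seminorm ℝ E) : Continuous p :=
  p.convexOn.locallyLipschitz.continuous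

theorem exists_pos_mul_norm_le_of_forall_eq_zero (p : Seminorm ℝ E) (U : Submodule ℝ E)
    (hU : ∀ u ∈ U, p u = 0 → u = 0) : ∃ c > 0, ∀ u ∈ U, c * ‖u‖ ≤ p u := by
  set K := (U : Set E) ∩ sphere 0 1
  have normalize_mem : ∀ u ∈ U, u ≠ 0 → ‖u‖⁻¹ • u ∈ K := fun u hu hu0 =>
    ⟨U.smul_mem _ hu, by simp [norm_smul, hu0]⟩
  rcases K.eq_empty_or_nonempty with hK | hK
  · refine ⟨1, one_pos, fun u hu => ?_⟩
    obtain rfl : u = 0 := by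
      by_contra hu0
      simpa [hK] using normalize_mem u hu hu0
    simp
  have hK_compact : IsCompact K :=
    (isCompact_sphere 0 1).inter_left U.closed_of_finiteDimensional
  obtain ⟨u₀, hu₀, hmin⟩ :=
    hK_compact.exists_isMinOn hK p.continuous_of_finiteDimensional.continuousOn
  have hu₀_pos : 0 < p u₀ := by
    refine (apply_nonneg p u₀).lt_of_ne' fun h => ?_
    simpa [hU u₀ hu₀.1 h] using hu₀.2
  refine ⟨p u₀, hu₀_pos, fun u hu => ?_⟩
  rcases eq_or_ne u 0 with rfl | hu0
  · simp
  have h : p u₀ ≤ p (‖u‖⁻¹ • u) := hmin (normalize_mem u hu hu0)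
  rw [map_smul_eq_mul, norm_inv, norm_norm] at h
  rw [le_inv_mul_iff₀ (norm_pos_iff.mpr hu0)] at h
  linarith

theorem exists_pos_mul_dist_le (p : Seminorm ℝ E) {Z : Submodule ℝ E}
    (hZ : ∀ x, p x = 0 ↔ x ∈ Z) : ∃ c > 0, ∀ x, ∃ z ∈ Z, c * dist x z ≤ p x := by
  obtain ⟨U, hU⟩ := Z.exists_isCompl
  obtain ⟨c, hc, hcU⟩ := p.exists_pos_mul_norm_le_of_forall_eq_zero U fun u hu hpu =>
    (Submodule.disjoint_def.mp hU.disjoint) u ((hZ u).mp hpu) hu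
  refine ⟨c, hc, fun x => ?_⟩
  set z := Z.projection U hU x
  have hpz : p z = 0 := (hZ z).mpr (Z.projection_apply_mem hU x)
  refine ⟨z, Z.projection_apply_mem hU x, ?_⟩
  calc c * dist x z = c * ‖x - z‖ := by rw [dist_eq_norm]
    _ ≤ p (x - z) := hcU _ (Z.sub_projection_mem hU x)
    _ = p x := le_antisymm (by simpa [hpz] using map_sub_le_add p x z)
        (by simpa [hpz] using map_add_le_add p (x - z) z)

end Seminorm

namespace IsDegenerateNorm

variable {V : Type*} [AddCommGroup V] [Module ℝ V] {N : V → ℝ≥0∞}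

def domain (hN : IsDegenerateNorm N) : Submodule ℝ V where
  carrier := {v | N v ≠ ⊤}
  zero_mem' := by simp [hN.map_zero]
  add_mem' {u v} hu hv := ne_top_of_le_ne_top (ENNReal.add_ne_top.mpr ⟨hu, hv⟩) (hN.add_le u v)
  smul_mem' c v hv := by
    rcases eq_or_ne c 0 with rfl | hc
    · simp [hN.map_zero]
    · simpa [hN.smul c hc v, ENNReal.mul_eq_top, hc] using hv

def toSeminorm (hN : IsDegenerateNorm N) : Seminorm ℝ hN.domain :=
  .of (fun v => (N v).toReal)
    (fun u v => by
      rw [← ENNReal.toReal_add u.2 v.2]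
      exact ENNReal.toReal_mono (ENNReal.add_ne_top.mpr ⟨u.2, v.2⟩) (hN.add_le u v))
    (fun c v => by
      rcases eq_or_ne c 0 with rfl | hc
      · simp [hN.map_zero]
      · simp [hN.smul c hc, ENNReal.toReal_ofReal (abs_nonneg c)])

theorem ofReal_toSeminorm (hN : IsDegenerateNorm N) (v : hN.domain) :
    ENNReal.ofReal (hN.toSeminorm v) = N v :=
  ENNReal.ofReal_toReal v.2

theorem exists_pos_mul_dist_le {E : Type*} [NormedAddCommGroup E] [NormedSpace ℝ E]
    [FiniteDimensional ℝ E] {N : E → ℝ≥0∞} (hN : IsDegenerateNorm N) {Z : Submodule ℝ E}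
    (hZ : ∀ x, N x = 0 ↔ x ∈ Z) :
    ∃ c > 0, ∀ x, ∃ z ∈ Z, ENNReal.ofReal (c * dist x z) ≤ N x := by
  have hZ' : ∀ v : hN.domain, hN.toSeminorm v = 0 ↔ v ∈ Z.comap hN.domain.subtype := fun v => by
    rw [Submodule.mem_comap, Submodule.subtype_apply, ← hZ, ← hN.ofReal_toSeminorm,
      ENNReal.ofReal_eq_zero]
    exact (apply_nonneg hN.toSeminorm v).ge_iff_eq'.symm
  obtain ⟨c, hc, hcN⟩ := hN.toSeminorm.exists_pos_mul_dist_le hZ'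
  refine ⟨c, hc, fun x => ?_⟩
  by_cases hx : N x = ⊤
  · exact ⟨0, Z.zero_mem, hx ▸ le_top⟩
  obtain ⟨z, hz, hle⟩ := hcN ⟨x, hx⟩
  exact ⟨z, hz, (hN.ofReal_toSeminorm ⟨x, hx⟩) ▸ ENNReal.ofReal_le_ofReal hle⟩

end IsDegenerateNorm

theorem exists_pos_le_dist_of_forall_exists_norm_sub_le {E : Type*} [NormedAddCommGroup E]
    {Λ Z : AddSubgroup E} (hΛ : ∀ r, ((Λ : Set E) ∩ closedBall 0 r).Finite)
    (hZ : IsClosed (Z : Set E)) {R : ℝ} (hR : ∀ z ∈ Z, ∃ w ∈ Λ, w ∈ Z ∧ ‖z - w‖ ≤ R) :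
    ∃ ε > 0, ∀ x ∈ Λ, x ∉ Z → ∀ z ∈ Z, ε ≤ dist x z := by
  set F := ((Λ : Set E) ∩ closedBall 0 (R + 1)) \ (Z : Set E)
  have hF : IsCompact F := ((hΛ (R + 1)).subset Set.sdiff_subset).isCompact
  obtain ⟨r, hr, hrF⟩ := exists_pos_forall_lt_edist hF hZ Set.disjoint_sdiff_left
  refine ⟨min 1 r, by positivity, fun x hx hxZ z hz => ?_⟩
  by_contra! hxz
  obtain ⟨w, hwΛ, hwZ, hzw⟩ := hR z hz
  have hxw : x - w ∈ F := by
    refine ⟨⟨Λ.sub_mem hx hwΛ, mem_closedBall_zero_iff.mpr ?_⟩, fun h => hxZ ?_⟩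
    · calc ‖x - w‖ = ‖(x - z) + (z - w)‖ := by rw [sub_add_sub_cancel]
        _ ≤ ‖x - z‖ + ‖z - w‖ := norm_add_le _ _
        _ ≤ 1 + R := add_le_add (dist_eq_norm x z ▸ (hxz.trans_le (min_le_left _ _)).le) hzw
        _ = R + 1 := add_comm _ _
    · simpa using Z.add_mem h hwZ
  have hr_lt := hrF (x - w) hxw (z - w) (Z.sub_mem hz hwZ)
  rw [edist_sub_right, edist_nndist, ENNReal.coe_lt_coe, ← NNReal.coe_lt_coe, coe_nndist] at hr_lt
  exact (hr_lt.trans (hxz.trans_le (min_le_right _ _))).false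

theorem Submodule.exists_norm_sub_le_of_le_span_inter {E : Type*} [NormedAddCommGroup E]
    [NormedSpace ℝ E] [FiniteDimensional ℝ E] (Λ : AddSubgroup E) (Z : Submodule ℝ E)
    (hZ : Z ≤ Submodule.span ℝ ((Λ : Set E) ∩ Z)) :
    ∃ R, ∀ z ∈ Z, ∃ w ∈ Λ, w ∈ Z ∧ ‖z - w‖ ≤ R := by
  obtain ⟨b, hb, hspan, hli⟩ := exists_linearIndependent ℝ ((Λ : Set E) ∩ Z)
  have : Fintype b := hli.setFinite.fintype
  refine ⟨∑ j : b, ‖(j : E)‖, fun z hz => ?_⟩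
  have hz' : z ∈ Submodule.span ℝ (Set.range ((↑) : b → E)) := by
    rw [Subtype.range_coe, hspan]
    exact hZ hz
  obtain ⟨c, rfl⟩ := (Submodule.mem_span_range_iff_exists_fun ℝ).mp hz'
  refine ⟨∑ j, round (c j) • (j : E), Λ.sum_mem fun j _ => Λ.zsmul_mem (hb j.2).1 _,
    Z.sum_mem fun j _ => Z.toAddSubgroup.zsmul_mem (hb j.2).2 _, ?_⟩
  rw [← Finset.sum_sub_distrib]
  refine (norm_sum_le _ _).trans (Finset.sum_le_sum fun j _ => ?_)
  rw [← Int.cast_smul_eq_zsmul ℝ, ← sub_smul, norm_smul, Real.norm_eq_abs]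
  exact mul_le_of_le_one_left (norm_nonneg _) ((abs_sub_round _).trans (by norm_num))

def integerPoints (ι : Type*) : AddSubgroup (ι → ℝ) :=
  (AddMonoidHom.compLeft (Int.castAddHom ℝ) ι).range

theorem finite_integerPoints_inter_closedBall {ι : Type*} [Fintype ι] (r : ℝ) :
    ((integerPoints ι : Set (ι → ℝ)) ∩ closedBall 0 r).Finite := by
  refine ((isCompact_closedBall (0 : ι → ℤ) r).finite_of_discrete.image
    fun P i => (P i : ℝ)).subset ?_
  rintro _ ⟨⟨P, rfl⟩, hP⟩
  refine ⟨P, ?_, rfl⟩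
  rw [mem_closedBall_zero_iff] at hP ⊢
  convert hP using 1
  simp only [Pi.norm_def]
  congr! 3

theorem exists_natCast_smul_mem_integerPoints {ι : Type*} [Fintype ι] {v : ι → ℝ}
    (hv : ∀ i, ∃ q : ℚ, v i = q) : ∃ d : ℕ, d ≠ 0 ∧ (d : ℝ) • v ∈ integerPoints ι := by
  choose q hq using hv
  set d := ∏ i, (q i).den
  refine ⟨d, Finset.prod_ne_zero_iff.mpr fun i _ => (q i).den_nz,
    fun i => (q i).num * (d / (q i).den : ℕ), funext fun i => ?_⟩
  obtain ⟨k, hk⟩ : (q i).den ∣ d := Finset.dvd_prod_of_mem _ (Finset.mem_univ i)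
  change (((q i).num * ((d / (q i).den : ℕ) : ℤ) : ℤ) : ℝ) = (d : ℝ) * v i
  rw [hk, Nat.mul_div_cancel_left _ (q i).den_pos, hq i]
  have hnum : ((q i).num * k : ℚ) = ((q i).den * k : ℕ) * q i := by
    push_cast
    rw [← Rat.mul_den_eq_num]
    ring
  exact_mod_cast hnum

theorem span_le_span_integerPoints_inter {ι : Type*} [Fintype ι] (s : Set (ι → ℝ))
    (hs : ∀ v ∈ s, ∀ i, ∃ q : ℚ, v i = q) :
    Submodule.span ℝ s ≤
      Submodule.span ℝ ((integerPoints ι : Set (ι → ℝ)) ∩ Submodule.span ℝ s) := by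
  rw [Submodule.span_le]
  intro v hv
  obtain ⟨d, hd, hdv⟩ := exists_natCast_smul_mem_integerPoints (hs v hv)
  have hmem :
      (d : ℝ) • v ∈ Submodule.span ℝ ((integerPoints ι : Set (ι → ℝ)) ∩ Submodule.span ℝ s) :=
    Submodule.subset_span ⟨hdv, Submodule.smul_mem _ _ (Submodule.subset_span hv)⟩
  simpa [hd] using Submodule.smul_mem _ (d : ℝ)⁻¹ hmem

theorem exists_pos_le_dist_span_of_rat {ι : Type*} [Fintype ι] (s : Set (ι → ℝ))
    (hs : ∀ v ∈ s, ∀ i, ∃ q : ℚ, v i = q) :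
    ∃ ε > 0, ∀ x ∈ integerPoints ι, x ∉ Submodule.span ℝ s →
      ∀ z ∈ Submodule.span ℝ s, ε ≤ dist x z := by
  obtain ⟨R, hR⟩ := Submodule.exists_norm_sub_le_of_le_span_inter (integerPoints ι)
    (Submodule.span ℝ s) (span_le_span_integerPoints_inter s hs)
  exact exists_pos_le_dist_of_forall_exists_norm_sub_le
    (Z := (Submodule.span ℝ s).toAddSubgroup) finite_integerPoints_inter_closedBall
    (Submodule.span ℝ s).closed_of_finiteDimensional hR

/-- **Automatic gap of degenerate norms with rational vanishing locus**
(Lemma `auto gap of norm`).  Let `‖·‖` be a degenerate norm on `ℝⁿ` whose vanishing locus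
`{v : ‖v‖ = 0}` is a rational subspace (the span of a set of vectors with rational
coordinates).  Then there is `C > 0` such that every integer point `P ∈ ℤⁿ` has `‖P‖ = 0`
or `‖P‖ ≥ C`. -/
theorem degenerate_norm_gap_on_integer_points {n : ℕ}
    (N : (Fin n → ℝ) → ℝ≥0∞) (hN : IsDegenerateNorm N)
    (s : Set (Fin n → ℝ)) (hs : ∀ v ∈ s, ∀ i, ∃ q : ℚ, v i = (q : ℝ))
    (hz : {v : Fin n → ℝ | N v = 0} = (Submodule.span ℝ s : Set (Fin n → ℝ))) :
    ∃ C : ℝ≥0∞, 0 < C ∧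
      ∀ P : Fin n → ℤ, N (fun i => (P i : ℝ)) = 0 ∨ C ≤ N (fun i => (P i : ℝ)) := by
  have hker : ∀ v, N v = 0 ↔ v ∈ Submodule.span ℝ s := fun v => Set.ext_iff.mp hz v
  obtain ⟨c, hc, hN_ge⟩ := hN.exists_pos_mul_dist_le hker
  obtain ⟨ε, hε, hε_le⟩ := exists_pos_le_dist_span_of_rat s hs
  refine ⟨ENNReal.ofReal (c * ε), ENNReal.ofReal_pos.mpr (mul_pos hc hε), fun P => ?_⟩
  refine or_iff_not_imp_left.mpr fun hP => ?_
  obtain ⟨z, hzZ, hNz⟩ := hN_ge (fun i => (P i : ℝ))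
  calc ENNReal.ofReal (c * ε) ≤ ENNReal.ofReal (c * dist (fun i => (P i : ℝ)) z) := by
        gcongr
        exact hε_le _ ⟨P, rfl⟩ ((hker _).not.mp hP) z hzZ
    _ ≤ N (fun i => (P i : ℝ)) := hNz
end

section
/- Let ‖·‖₁ and ‖·‖₂ be degenerate norms on a real vector space V, with unit balls B₁ and B₂, and let ‖·‖_m be their ℓ¹-mixture, with unit ball B_m. Then B_m equals the algebraic closure of the convex hull of B₁ ∪ B₂. -/
open scoped ENNReal

/-- The `ℓ¹`-mixture of two degenerate norms:
`‖v‖_m = inf { ‖v₁‖₁ + ‖v₂‖₂ : v₁ + v₂ = v }`. -/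
noncomputable def l1Mixture {V : Type*} [AddCommGroup V] [Module ℝ V]
    (N₁ N₂ : V → ℝ≥0∞) (v : V) : ℝ≥0∞ :=
  ⨅ u : V, N₁ u + N₂ (v - u)

/-- The *algebraic closure* of a subset `A` of a real vector space: the set of points `x`
for which there is a direction `d` such that for every `ε > 0` some `t ∈ [0, ε]` has
`x + t • d ∈ A`. -/
def linAlgebraicClosure {V : Type*} [AddCommGroup V] [Module ℝ V] (A : Set V) : Set V :=
  {x : V | ∃ d : V, ∀ ε : ℝ, 0 < ε → ∃ t : ℝ, 0 ≤ t ∧ t ≤ ε ∧ x + t • d ∈ A}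

/-! The mixture is itself a degenerate norm, so its unit ball is convex, contains `B₁ ∪ B₂`, and
is algebraically closed: if `x + s • d` and `x + t • d` lie in it with `0 ≤ t < s`, then
`(s - t) • x = s • (x + t • d) - t • (x + s • d)` has norm at most `s + t`, and `t → 0`.
Conversely, if `v = u + (v - u)` with `‖u‖₁ + ‖v - u‖₂ < 1`, pick `a` strictly between `‖u‖₁` and
`1 - ‖v - u‖₂`; then `v = a • (a⁻¹ • u) + (1 - a) • ((1 - a)⁻¹ • (v - u))` lies in the convex
hull. Hence `s • v` lies in the hull for all `s ∈ [0, 1)` whenever `‖v‖_m ≤ 1`, and `v` is in the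
algebraic closure along the direction `-v`. -/

section linAlgebraicClosure

variable {V : Type*} [AddCommGroup V] [Module ℝ V]

theorem linAlgebraicClosure_mono {A B : Set V} (hAB : A ⊆ B) :
    linAlgebraicClosure A ⊆ linAlgebraicClosure B := fun _ ⟨d, hd⟩ ↦
  ⟨d, fun ε hε ↦ (hd ε hε).imp fun _ ⟨ht₀, htε, ht⟩ ↦ ⟨ht₀, htε, hAB ht⟩⟩

theorem mem_linAlgebraicClosure_of_forall_smul_mem {A : Set V} {x : V}
    (h : ∀ s : ℝ, 0 ≤ s → s < 1 → s • x ∈ A) : x ∈ linAlgebraicClosure A := by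
  refine ⟨-x, fun ε hε ↦ ⟨min ε 1, by positivity, min_le_left _ _, ?_⟩⟩
  have hx : x + min ε 1 • -x = (1 - min ε 1) • x := by module
  rw [hx]
  exact h _ (sub_nonneg.2 (min_le_right _ _)) (sub_lt_self _ (by positivity))

end linAlgebraicClosure

namespace IsDegenerateNorm

variable {V : Type*} [AddCommGroup V] [Module ℝ V] {N : V → ℝ≥0∞}

theorem of_smul_le (map_zero : N 0 = 0)
    (smul_le : ∀ c : ℝ, c ≠ 0 → ∀ v, N (c • v) ≤ ENNReal.ofReal |c| * N v)
    (add_le : ∀ u v, N (u + v) ≤ N u + N v) : IsDegenerateNorm N where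
  map_zero := map_zero
  add_le := add_le
  smul c hc v := by
    refine le_antisymm (smul_le c hc v) ?_
    calc ENNReal.ofReal |c| * N v = ENNReal.ofReal |c| * N (c⁻¹ • c • v) := by
          rw [inv_smul_smul₀ hc]
      _ ≤ ENNReal.ofReal |c| * (ENNReal.ofReal |c⁻¹| * N (c • v)) := by
          gcongr; exact smul_le _ (inv_ne_zero hc) _
      _ = N (c • v) := by
          rw [← mul_assoc, ← ENNReal.ofReal_mul (abs_nonneg _), ← abs_mul, mul_inv_cancel₀ hc,
            abs_one, ENNReal.ofReal_one, one_mul]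

theorem map_smul (h : IsDegenerateNorm N) (c : ℝ) (v : V) :
    N (c • v) = ENNReal.ofReal |c| * N v := by
  rcases eq_or_ne c 0 with rfl | hc
  · simp [h.map_zero]
  · exact h.smul c hc v

theorem convex_ball (h : IsDegenerateNorm N) : Convex ℝ {v | N v ≤ 1} := by
  intro u (hu : N u ≤ 1) v (hv : N v ≤ 1) a b ha hb hab
  calc N (a • u + b • v) ≤ N (a • u) + N (b • v) := h.add_le _ _
    _ ≤ ENNReal.ofReal a * 1 + ENNReal.ofReal b * 1 := by
        rw [h.map_smul, h.map_smul, abs_of_nonneg ha, abs_of_nonneg hb]; gcongr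
    _ = 1 := by rw [mul_one, mul_one, ← ENNReal.ofReal_add ha hb, hab, ENNReal.ofReal_one]

theorem smul_lt_one (h : IsDegenerateNorm N) {v : V} (hv : N v ≤ 1) {s : ℝ} (hs₀ : 0 ≤ s)
    (hs₁ : s < 1) : N (s • v) < 1 :=
  calc N (s • v) = ENNReal.ofReal s * N v := by rw [h.map_smul, abs_of_nonneg hs₀]
    _ ≤ ENNReal.ofReal s := mul_le_of_le_one_right' hv
    _ < 1 := ENNReal.ofReal_lt_one.2 hs₁

theorem inv_smul_le_one (h : IsDegenerateNorm N) {c : ℝ} (hc : 0 < c) {u : V}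
    (hu : N u ≤ ENNReal.ofReal c) : N (c⁻¹ • u) ≤ 1 :=
  calc N (c⁻¹ • u) = ENNReal.ofReal c⁻¹ * N u := by
        rw [h.map_smul, abs_of_pos (inv_pos.2 hc)]
    _ ≤ ENNReal.ofReal c⁻¹ * ENNReal.ofReal c := by gcongr
    _ = 1 := by
        rw [← ENNReal.ofReal_mul (inv_nonneg.2 hc.le), inv_mul_cancel₀ hc.ne', ENNReal.ofReal_one]

theorem ofReal_sub_mul_le (h : IsDegenerateNorm N) {x d : V} {s t : ℝ} (ht : 0 ≤ t)
    (hts : t ≤ s) (hs : N (x + s • d) ≤ 1) (htd : N (x + t • d) ≤ 1) :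
    ENNReal.ofReal (s - t) * N x ≤ ENNReal.ofReal (s + t) := by
  have hx : (s - t) • x = s • (x + t • d) + (-t) • (x + s • d) := by module
  calc ENNReal.ofReal (s - t) * N x = N ((s - t) • x) := by
        rw [h.map_smul, abs_of_nonneg (sub_nonneg.2 hts)]
    _ ≤ N (s • (x + t • d)) + N ((-t) • (x + s • d)) := hx ▸ h.add_le _ _
    _ ≤ ENNReal.ofReal s * 1 + ENNReal.ofReal t * 1 := by
        rw [h.map_smul, h.map_smul, abs_neg, abs_of_nonneg ht, abs_of_nonneg (ht.trans hts)]
        gcongr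
    _ = ENNReal.ofReal (s + t) := by rw [mul_one, mul_one, ENNReal.ofReal_add (ht.trans hts) ht]

theorem linAlgebraicClosure_ball_subset (h : IsDegenerateNorm N) :
    linAlgebraicClosure {v | N v ≤ 1} ⊆ {v | N v ≤ 1} := by
  rintro x ⟨d, hd⟩
  obtain ⟨s, hs₀, -, hs⟩ := hd 1 one_pos
  rcases hs₀.eq_or_lt with rfl | hs₀
  · simpa using hs
  refine ENNReal.le_of_forall_pos_le_add fun η hη _ ↦ ?_
  obtain ⟨t, ht₀, htη, ht⟩ := hd (η * s / (2 + η)) (by positivity)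
  rw [le_div_iff₀ (by positivity)] at htη
  have hts : t < s := by nlinarith [η.2]
  refine (ENNReal.mul_le_mul_iff_right (ENNReal.ofReal_pos.2 (sub_pos.2 hts)).ne'
    ENNReal.ofReal_ne_top).1 ?_
  calc ENNReal.ofReal (s - t) * N x ≤ ENNReal.ofReal (s + t) :=
        h.ofReal_sub_mul_le ht₀ hts.le hs ht
    _ ≤ ENNReal.ofReal ((s - t) * (1 + η)) := ENNReal.ofReal_le_ofReal (by nlinarith)
    _ = ENNReal.ofReal (s - t) * (1 + η) := by
        rw [ENNReal.ofReal_mul (by linarith), ENNReal.ofReal_add zero_le_one η.coe_nonneg,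
          ENNReal.ofReal_one, ENNReal.ofReal_coe_nnreal]

end IsDegenerateNorm

section l1Mixture

variable {V : Type*} [AddCommGroup V] [Module ℝ V] {N₁ N₂ : V → ℝ≥0∞}

theorem l1Mixture_le (v u : V) : l1Mixture N₁ N₂ v ≤ N₁ u + N₂ (v - u) :=
  iInf_le (fun u ↦ N₁ u + N₂ (v - u)) u

theorem l1Mixture_le_left (h₂ : N₂ 0 = 0) (v : V) : l1Mixture N₁ N₂ v ≤ N₁ v := by
  simpa [h₂] using l1Mixture_le (N₂ := N₂) v v

theorem l1Mixture_le_right (h₁ : N₁ 0 = 0) (v : V) : l1Mixture N₁ N₂ v ≤ N₂ v := by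
  simpa [h₁] using l1Mixture_le (N₁ := N₁) v 0

theorem IsDegenerateNorm.l1Mixture (h₁ : IsDegenerateNorm N₁) (h₂ : IsDegenerateNorm N₂) :
    IsDegenerateNorm (l1Mixture N₁ N₂) := by
  refine .of_smul_le (nonpos_iff_eq_zero.1 ((l1Mixture_le_left h₂.map_zero 0).trans_eq
    h₁.map_zero)) (fun c hc v ↦ ?_) (fun u v ↦ ?_)
  · conv_rhs => rw [_root_.l1Mixture]
    rw [ENNReal.mul_iInf_of_ne (ENNReal.ofReal_pos.2 (abs_pos.2 hc)).ne' ENNReal.ofReal_ne_top]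
    refine le_iInf fun u ↦ (l1Mixture_le _ (c • u)).trans_eq ?_
    rw [← smul_sub, h₁.smul c hc, h₂.smul c hc, mul_add]
  · refine ENNReal.le_iInf_add_iInf fun a b ↦ (l1Mixture_le _ (a + b)).trans ?_
    calc N₁ (a + b) + N₂ (u + v - (a + b)) = N₁ (a + b) + N₂ ((u - a) + (v - b)) := by
          rw [add_sub_add_comm]
      _ ≤ (N₁ a + N₁ b) + (N₂ (u - a) + N₂ (v - b)) :=
          add_le_add (h₁.add_le a b) (h₂.add_le _ _)
      _ = N₁ a + N₂ (u - a) + (N₁ b + N₂ (v - b)) := by ring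

theorem mem_convexHull_of_l1Mixture_lt_one (h₁ : IsDegenerateNorm N₁)
    (h₂ : IsDegenerateNorm N₂) {v : V} (hv : l1Mixture N₁ N₂ v < 1) :
    v ∈ convexHull ℝ ({v | N₁ v ≤ 1} ∪ {v | N₂ v ≤ 1}) := by
  obtain ⟨u, hu⟩ := iInf_lt_iff.1 hv
  have hu₁ : N₁ u ≠ ⊤ := ne_top_of_lt (le_self_add.trans_lt hu)
  have hu₂ : N₂ (v - u) ≠ ⊤ := ne_top_of_lt (le_add_self.trans_lt hu)
  have hsum : (N₁ u).toReal + (N₂ (v - u)).toReal < 1 := by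
    rw [← ENNReal.toReal_add hu₁ hu₂]
    exact ENNReal.toReal_lt_of_lt_ofReal (by rwa [ENNReal.ofReal_one])
  obtain ⟨a, ha₁, ha₂⟩ := exists_between (lt_sub_right_of_add_lt hsum)
  have ha₀ : 0 < a := ENNReal.toReal_nonneg.trans_lt ha₁
  have ha₀' : 0 < 1 - a := by linarith [ENNReal.toReal_nonneg (a := N₂ (v - u))]
  have hp₁ : N₁ (a⁻¹ • u) ≤ 1 :=
    h₁.inv_smul_le_one ha₀ ((ENNReal.le_ofReal_iff_toReal_le hu₁ ha₀.le).2 ha₁.le)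
  have hp₂ : N₂ ((1 - a)⁻¹ • (v - u)) ≤ 1 :=
    h₂.inv_smul_le_one ha₀' ((ENNReal.le_ofReal_iff_toReal_le hu₂ ha₀'.le).2 (by linarith))
  have hsplit : v = a • a⁻¹ • u + (1 - a) • (1 - a)⁻¹ • (v - u) := by
    rw [smul_inv_smul₀ ha₀.ne', smul_inv_smul₀ ha₀'.ne', add_sub_cancel]
  rw [hsplit]
  exact convex_convexHull ℝ _ (subset_convexHull ℝ _ (.inl hp₁))
    (subset_convexHull ℝ _ (.inr hp₂)) ha₀.le ha₀'.le (add_sub_cancel _ _)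

theorem convexHull_union_subset_l1Mixture_ball (h₁ : IsDegenerateNorm N₁)
    (h₂ : IsDegenerateNorm N₂) :
    convexHull ℝ ({v | N₁ v ≤ 1} ∪ {v | N₂ v ≤ 1}) ⊆ {v | l1Mixture N₁ N₂ v ≤ 1} :=
  convexHull_min (Set.union_subset
    (fun w (hw : N₁ w ≤ 1) ↦ (l1Mixture_le_left h₂.map_zero w).trans hw)
    (fun w (hw : N₂ w ≤ 1) ↦ (l1Mixture_le_right h₁.map_zero w).trans hw))
    (h₁.l1Mixture h₂).convex_ball

end l1Mixture

/-- **Unit ball of the `ℓ¹`-mixture** (Lemma `norm ball`).  The unit ball of the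
`ℓ¹`-mixture of two degenerate norms equals the algebraic closure of the convex hull of the
union of their unit balls. -/
theorem l1Mixture_unit_ball {V : Type*} [AddCommGroup V] [Module ℝ V]
    (N₁ N₂ : V → ℝ≥0∞) (h₁ : IsDegenerateNorm N₁) (h₂ : IsDegenerateNorm N₂) :
    {v : V | l1Mixture N₁ N₂ v ≤ 1} =
      linAlgebraicClosure (convexHull ℝ ({v : V | N₁ v ≤ 1} ∪ {v : V | N₂ v ≤ 1})) := by
  have hm := h₁.l1Mixture h₂
  refine Set.Subset.antisymm (fun v hv ↦ ?_) (fun v hv ↦ ?_)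
  · exact mem_linAlgebraicClosure_of_forall_smul_mem fun s hs₀ hs₁ ↦
      mem_convexHull_of_l1Mixture_lt_one h₁ h₂ (hm.smul_lt_one hv hs₀ hs₁)
  · exact hm.linAlgebraicClosure_ball_subset
      (linAlgebraicClosure_mono (convexHull_union_subset_l1Mixture_ball h₁ h₂) hv)
end
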